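/- arXiv:2401.16358 — 6 statements merged into one kernel-verified Lean document; each statement's English description precedes it below -/
import Mathlib

section
/- Let p ∈ Ass_R(M). Set X_p := {q ∈ Ass_R(M) : p ⊊ q}; let V := R if X_p = ∅, and V := ∏_{q ∈ X_p} q otherwise. Then v_p(M) = inf{u ∈ ℤ : there exists a homogeneous element x of M of degree u such that p·x = 0 and x ∉ Γ_V(M)}; in other words, v_p(M) equals the initial degree of the graded R-module ann_M(p)/(ann_M(p) ∩ Γ_V(M)). -/
/-!
Over a Noetherian module, `Γ_V(M) = (0 :_M V ^ N)` for `N` large, and the associated primes of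
`M ⧸ Γ_V(M)` are associated primes of `M` not containing `V`. If `p • x = 0`, `x ∉ Γ_V(M)` and
`(0 :_R x) ⊋ p`, an associated prime of `M ⧸ Γ_V(M)` containing `(0 :_R x)` would then lie in
`X_p` without containing `V`, which is absurd. Conversely, `(0 :_R x) = p` forces `x ∉ Γ_V(M)`,
since a prime containing the product `V` contains one of the primes of `X_p`, all strictly
larger than `p`.
-/

namespace Submodule

variable {R M : Type*} [CommRing R] [AddCommGroup M] [Module R M]

theorem exists_torsionBySet_pow_le [IsNoetherian R M] (I : Ideal R) :
    ∃ N, ∀ n, torsionBySet R M ↑(I ^ n) ≤ torsionBySet R M ↑(I ^ N) := by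
  obtain ⟨N, hN⟩ := monotone_stabilizes_iff_noetherian.mpr inferInstance
    ⟨fun n => torsionBySet R M ↑(I ^ n), fun i j h => torsionBySet_le_torsionBySet_pow i j h I⟩
  refine ⟨N, fun n => ?_⟩
  rcases le_total n N with h | h
  · exact torsionBySet_le_torsionBySet_pow n N h I
  · exact (hN n h).ge

theorem mem_colon_singleton_mk_torsionBySet_pow {I : Ideal R} {N : ℕ} {y : M} {r : R} :
    r ∈ (⊥ : Submodule R (M ⧸ torsionBySet R M ↑(I ^ N))).colon {Quotient.mk y} ↔
      r • y ∈ torsionBySet R M ↑(I ^ N) := by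
  rw [mem_colon_singleton, mem_bot, ← Quotient.mk_smul, Quotient.mk_eq_zero]

theorem not_le_of_isAssociatedPrime_quotient_torsionBySet_pow [IsNoetherianRing R]
    {I q : Ideal R} {N : ℕ}
    (hN : torsionBySet R M ↑(I ^ (N + 1)) ≤ torsionBySet R M ↑(I ^ N))
    (hq : IsAssociatedPrime q (M ⧸ torsionBySet R M ↑(I ^ N))) : ¬ I ≤ q := by
  obtain ⟨hqp, ybar, hy⟩ := isAssociatedPrime_iff.mp hq
  obtain ⟨y, rfl⟩ := Quotient.mk_surjective _ ybar
  intro hIq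
  have hIy : ∀ b ∈ I, b • y ∈ torsionBySet R M ↑(I ^ N) := fun b hb =>
    mem_colon_singleton_mk_torsionBySet_pow.mp (hy ▸ hIq hb)
  have hy0 : y ∈ torsionBySet R M ↑(I ^ (N + 1)) := by
    suffices ∀ r ∈ I ^ N * I, r • y = 0 from
      (mem_torsionBySet_iff _ _).mpr fun r => this r (pow_succ I N ▸ r.2)
    refine fun r hr => Submodule.mul_induction_on hr (fun a ha b hb => ?_) (fun z w hz hw => ?_)
    · rw [mul_smul]
      exact (mem_torsionBySet_iff _ _).mp (hIy b hb) ⟨a, ha⟩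
    · rw [add_smul, hz, hw, add_zero]
  refine hqp.ne_top (hy ▸ ?_)
  rw [(Quotient.mk_eq_zero _).mpr (hN hy0), colon_singleton_zero]

theorem isAssociatedPrime_of_isAssociatedPrime_quotient_torsionBySet_pow [IsNoetherianRing R]
    {I q : Ideal R} {N : ℕ}
    (hq : IsAssociatedPrime q (M ⧸ torsionBySet R M ↑(I ^ N))) (hIq : ¬ I ≤ q) :
    IsAssociatedPrime q M := by
  obtain ⟨hqp, ybar, hy⟩ := isAssociatedPrime_iff.mp hq
  obtain ⟨y, rfl⟩ := Quotient.mk_surjective _ ybar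
  obtain ⟨v, hvI, hvq⟩ := SetLike.not_le_iff_exists.mp
    fun h => hIq (Ideal.IsPrime.le_of_pow_le (hP := hqp) h)
  -- `v ∈ I ^ N` kills the torsion submodule and `v ∉ q`, so `(0 :_R v • y) = (T :_R y) = q`.
  refine isAssociatedPrime_iff.mpr ⟨hqp, v • y, ?_⟩
  ext r
  rw [mem_colon_singleton, mem_bot]
  constructor
  · intro hr
    replace hr := mem_colon_singleton_mk_torsionBySet_pow.mp (hy ▸ hr)
    rw [smul_comm]
    exact (mem_torsionBySet_iff _ _).mp hr ⟨v, hvI⟩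
  · intro hr
    have hrv : r * v ∈ q := by
      rw [hy, mem_colon_singleton_mk_torsionBySet_pow, mul_smul, hr]
      exact zero_mem _
    exact (hqp.mem_or_mem hrv).resolve_right hvq

theorem annihilator_span_singleton_eq_iff_notMem_torsionBySet_pow [IsNoetherianRing R]
    {p I : Ideal R} [p.IsPrime] (hIp : ¬ I ≤ p) (hI : ∀ q, IsAssociatedPrime q M → p < q → I ≤ q)
    {N : ℕ} (hN : torsionBySet R M ↑(I ^ (N + 1)) ≤ torsionBySet R M ↑(I ^ N))
    {x : M} (hx : p ≤ (R ∙ x).annihilator) :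
    (R ∙ x).annihilator = p ↔ x ∉ torsionBySet R M ↑(I ^ N) := by
  constructor
  · intro hxp hxT
    refine hIp (Ideal.IsPrime.le_of_pow_le (n := N) fun r hr => ?_)
    rw [← hxp]
    exact (mem_annihilator_span_singleton x r).mpr ((mem_torsionBySet_iff _ _).mp hxT ⟨r, hr⟩)
  · intro hxT
    by_contra hne
    have hxbar : (Quotient.mk x : M ⧸ torsionBySet R M ↑(I ^ N)) ≠ 0 :=
      fun h => hxT ((Quotient.mk_eq_zero _).mp h)
    obtain ⟨q, hq, hxq⟩ := exists_le_isAssociatedPrime_of_isNoetherianRing R _ hxbar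
    have hpq : p < q := (lt_of_le_of_ne hx (Ne.symm hne)).trans_le fun r hr => hxq <| by
      rw [mem_colon_singleton_mk_torsionBySet_pow,
        (mem_annihilator_span_singleton x r).mp hr]
      exact zero_mem _
    have hIq := not_le_of_isAssociatedPrime_quotient_torsionBySet_pow hN hq
    exact hIq (hI q (isAssociatedPrime_of_isAssociatedPrime_quotient_torsionBySet_pow hq hIq) hpq)

end Submodule

open Submodule

theorem v_number_eq_indeg_ann_mod_gamma_general
    {R M : Type*} [CommRing R] [IsNoetherianRing R]
    [AddCommGroup M] [Module R M] [Module.Finite R M]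
    (ℳ : ℤ → AddSubgroup M)
    (p : Ideal R) (hp : p ∈ associatedPrimes R M)
    (Xp : Set (Ideal R)) (hXp : Xp = {q | q ∈ associatedPrimes R M ∧ p < q})
    (V : Ideal R) (hV : V = ∏ᶠ q ∈ Xp, q)
    (Γ : Set M) (hΓ : Γ = {x : M | ∃ n : ℕ, 1 ≤ n ∧ ∀ r ∈ V ^ n, r • x = 0}) :
    sInf {u : ℤ | ∃ x ∈ ℳ u, p = (Submodule.span R {x}).annihilator}
      = sInf {u : ℤ | ∃ x ∈ ℳ u, (∀ r ∈ p, r • x = 0) ∧ x ∉ Γ} := by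
  have hpp : p.IsPrime := hp.isPrime
  have hXfin : Xp.Finite := hXp ▸ (associatedPrimes.finite R M).subset fun q hq => hq.1
  rw [finprod_mem_eq_finite_toFinset_prod _ hXfin] at hV
  have hVp : ¬ V ≤ p := by
    rw [hV, hpp.prod_le]
    rintro ⟨q, hq, hqp⟩
    rw [hXfin.mem_toFinset, hXp] at hq
    exact hq.2.not_ge hqp
  have hVq (q : Ideal R) (hq : IsAssociatedPrime q M) (hpq : p < q) : V ≤ q :=
    hV ▸ Ideal.prod_le_inf.trans (Finset.inf_le (hXfin.mem_toFinset.2 (hXp ▸ ⟨hq, hpq⟩)))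
  obtain ⟨N, hN⟩ := exists_torsionBySet_pow_le (M := M) V
  have hT : ∀ n, torsionBySet R M ↑(V ^ n) ≤ torsionBySet R M ↑(V ^ (N + 1)) := fun n =>
    (hN n).trans (torsionBySet_le_torsionBySet_pow N (N + 1) N.le_succ V)
  have hΓT : Γ = torsionBySet R M ↑(V ^ (N + 1)) := by
    ext x
    rw [hΓ, SetLike.mem_coe, mem_torsionBySet_iff]
    refine ⟨fun ⟨n, _, hn⟩ => ?_, fun hx => ⟨N + 1, Nat.le_add_left 1 N, fun r hr => hx ⟨r, hr⟩⟩⟩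
    exact (mem_torsionBySet_iff _ _).mp (hT n ((mem_torsionBySet_iff _ _).mpr fun r => hn r r.2))
  subst hΓT
  congr 1
  ext u
  refine exists_congr fun x => and_congr_right fun _ => ?_
  have hpx : (∀ r ∈ p, r • x = 0) ↔ p ≤ (R ∙ x).annihilator :=
    forall₂_congr fun r _ => (mem_annihilator_span_singleton x r).symm
  have key (hle : p ≤ (R ∙ x).annihilator) :=
    annihilator_span_singleton_eq_iff_notMem_torsionBySet_pow hVp hVq (hT (N + 2)) hle
  rw [hpx, eq_comm]
  exact ⟨fun hxp => ⟨hxp.ge, (key hxp.ge).1 hxp⟩, fun ⟨hle, hxT⟩ => (key hle).2 hxT⟩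

/-- Let `R` be a commutative Noetherian ℕ-graded ring (encoded as a ℤ-graded
ring whose negatively graded components vanish), and `M` a finitely generated ℤ-graded
`R`-module.  Let `p ∈ Ass_R(M)`, let `Xp := {q ∈ Ass_R(M) | p ⊊ q}`, and let
`V := ∏_{q ∈ Xp} q` (which is the unit ideal `R` when `Xp = ∅`, by the convention of the
finitary product).  Let `Γ := Γ_V(M) = ⋃_{n ≥ 1} (0 :_M V^n)`.  Then the v-number
`v_p(M) = inf{u | ∃ homogeneous x ∈ M_u, p = (0 :_R x)}` equals the initial degree of
`ann_M(p)/(ann_M(p) ∩ Γ_V(M))`, i.e. the infimum of the degrees `u` for which there is a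
homogeneous `x ∈ M_u` with `p • x = 0` and `x ∉ Γ_V(M)`. -/
theorem v_number_eq_indeg_ann_mod_gamma
    {R M : Type*} [CommRing R] [IsNoetherianRing R]
    [AddCommGroup M] [Module R M] [Module.Finite R M]
    (𝒜 : ℤ → AddSubgroup R) (ℳ : ℤ → AddSubgroup M)
    [GradedRing 𝒜] [DirectSum.Decomposition ℳ]
    (hsmul : ∀ (i j : ℤ), ∀ r ∈ 𝒜 i, ∀ x ∈ ℳ j, r • x ∈ ℳ (i + j))
    (hA : ∀ i : ℤ, i < 0 → 𝒜 i = ⊥)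
    (p : Ideal R) (hp : p ∈ associatedPrimes R M)
    (Xp : Set (Ideal R)) (hXp : Xp = {q | q ∈ associatedPrimes R M ∧ p < q})
    (V : Ideal R) (hV : V = ∏ᶠ q ∈ Xp, q)
    (Γ : Set M) (hΓ : Γ = {x : M | ∃ n : ℕ, 1 ≤ n ∧ ∀ r ∈ V ^ n, r • x = 0}) :
    sInf {u : ℤ | ∃ x ∈ ℳ u, p = (Submodule.span R {x}).annihilator}
      = sInf {u : ℤ | ∃ x ∈ ℳ u, (∀ r ∈ p, r • x = 0) ∧ x ∉ Γ} :=
  v_number_eq_indeg_ann_mod_gamma_general ℳ p hp Xp hXp V hV Γ hΓ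
end

section
/- Assume R is standard graded (generated as an R_0-algebra by its degree-1 component) and set R_+ := ⨁_{n ≥ 1} R_n. If p ∈ Ass_R(M) satisfies R_+ ⊆ p, then v_p(M) ≤ end(Γ_{R_+}(M)), where end(Γ_{R_+}(M)) := sup{n ∈ ℤ : the degree-n component of Γ_{R_+}(M) is nonzero}. -/
/-!
Let `p = ann x`. Since `R_+ ⊆ p`, the ideal `p` is homogeneous, so it kills every homogeneous
component `x_i` of `x`; and the annihilators of the components intersect inside the prime `p`,
so one of them is contained in `p`. That `x_i` satisfies `ann x_i = p` and is killed by `R_+`,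
so its degree bounds `v_p(M)` from above and `end(Γ_{R_+}(M))` from below.

The bound only holds for the true infimum and supremum, so both sets must be bounded (in `ℤ`,
`sInf` and `sSup` of unbounded sets are junk). `M` lives in degrees bounded below, being
generated by finitely many homogeneous elements over a nonnegatively graded ring. `Γ_{R_+}(M)`
lives in degrees bounded above: it is generated by finitely many homogeneous elements, each
killed by some `R_+^k`, and standard grading puts `R_j` inside `R_+^j`.
-/

open scoped Pointwise

section GradedModule

open DirectSum

variable {R M : Type*} [CommRing R] [AddCommGroup M] [Module R M]
  {𝒜 : ℤ → AddSubgroup R} {ℳ : ℤ → AddSubgroup M}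

theorem mem_pow_of_mem_natCast
    (hstd : ∀ n : ℤ, 0 ≤ n →
      (𝒜 (n + 1) : Set R) ⊆ ↑(AddSubgroup.closure ((𝒜 n : Set R) * (𝒜 1 : Set R))))
    {I : Ideal R} (hI : (𝒜 1 : Set R) ⊆ I) :
    ∀ (n : ℕ), ∀ r ∈ 𝒜 n, r ∈ I ^ n
  | 0, _, _ => by simp
  | n + 1, r, hr => by
    have hle : AddSubgroup.closure ((𝒜 n : Set R) * (𝒜 1 : Set R)) ≤
        (I ^ (n + 1)).toAddSubgroup := by
      rw [AddSubgroup.closure_le, pow_succ]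
      rintro _ ⟨a, ha, b, hb, rfl⟩
      exact Ideal.mul_mem_mul (mem_pow_of_mem_natCast hstd hI n a ha) (hI hb)
    exact hle (hstd n n.cast_nonneg (by exact_mod_cast hr))

theorem mem_pow_of_le_of_mem
    (hstd : ∀ n : ℤ, 0 ≤ n →
      (𝒜 (n + 1) : Set R) ⊆ ↑(AddSubgroup.closure ((𝒜 n : Set R) * (𝒜 1 : Set R))))
    {I : Ideal R} (hI : (𝒜 1 : Set R) ⊆ I) {k : ℕ} {m : ℤ} (hkm : k ≤ m) {r : R}
    (hr : r ∈ 𝒜 m) :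
    r ∈ I ^ k := by
  lift m to ℕ using by omega
  exact Ideal.pow_le_pow_right (by omega) (mem_pow_of_mem_natCast hstd hI m r hr)

section Decomposition

variable [Decomposition ℳ]

theorem coe_decompose_smul_add_of_left_mem
    (hsmul : ∀ (i j : ℤ), ∀ r ∈ 𝒜 i, ∀ x ∈ ℳ j, r • x ∈ ℳ (i + j))
    {r : R} {j : ℤ} (hr : r ∈ 𝒜 j) (x : M) (n : ℤ) :
    (decompose ℳ (r • x) (j + n) : M) = r • (decompose ℳ x n : M) := by
  induction x using Decomposition.inductionOn ℳ with
  | zero => simp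
  | @homogeneous i m =>
    have hrm := hsmul j i r hr m m.2
    by_cases hin : i = n
    · subst hin
      rw [decompose_of_mem_same ℳ hrm, decompose_of_mem_same ℳ m.2]
    · rw [decompose_of_mem_ne ℳ hrm (by omega), decompose_of_mem_ne ℳ m.2 hin, smul_zero]
  | add x y hx hy =>
    simp only [smul_add, decompose_add, DirectSum.add_apply, AddSubgroup.coe_add, hx, hy]

theorem span_homogeneous_eq_top : Submodule.span R {y : M | ∃ d, y ∈ ℳ d} = ⊤ := by
  refine Submodule.eq_top_iff'.mpr fun x => ?_
  induction x using Decomposition.inductionOn ℳ with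
  | zero => exact Submodule.zero_mem _
  | @homogeneous d m => exact Submodule.subset_span ⟨d, m.2⟩
  | add x y hx hy => exact Submodule.add_mem _ hx hy

theorem exists_annihilator_decompose_le {p : Ideal R} (hp : p.IsPrime) {x : M}
    (hx : (Submodule.span R {x}).annihilator ≤ p) :
    ∃ n, (Submodule.span R {(decompose ℳ x n : M)}).annihilator ≤ p := by
  classical
  suffices hinf : ((decompose ℳ x).support.inf fun n =>
      (Submodule.span R {(decompose ℳ x n : M)}).annihilator) ≤ p by
    obtain ⟨n, -, hn⟩ := hp.inf_le'.mp hinf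
    exact ⟨n, hn⟩
  refine le_trans (fun a ha => ?_) hx
  rw [Submodule.mem_annihilator_span_singleton, ← sum_support_decompose ℳ x, Finset.smul_sum]
  exact Finset.sum_eq_zero fun n hn => (Submodule.mem_annihilator_span_singleton _ _).mp
    (Finset.inf_le hn (f := fun n => (Submodule.span R {(decompose ℳ x n : M)}).annihilator) ha)

variable [GradedRing 𝒜]

theorem coe_decompose_smul_of_right_mem
    (hsmul : ∀ (i j : ℤ), ∀ r ∈ 𝒜 i, ∀ x ∈ ℳ j, r • x ∈ ℳ (i + j))
    {y : M} {d : ℤ} (hy : y ∈ ℳ d) (r : R) (n : ℤ) :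
    (decompose ℳ (r • y) n : M) = (decompose 𝒜 r (n - d) : R) • y := by
  induction r using Decomposition.inductionOn 𝒜 with
  | zero => simp
  | @homogeneous j r =>
    have hry := hsmul j d r r.2 y hy
    by_cases hjn : j + d = n
    · subst hjn
      rw [decompose_of_mem_same ℳ hry, add_sub_cancel_right, decompose_of_mem_same 𝒜 r.2]
    · rw [decompose_of_mem_ne ℳ hry hjn, decompose_of_mem_ne 𝒜 r.2 (by omega), zero_smul]
  | add r s hr hs =>
    simp only [add_smul, decompose_add, DirectSum.add_apply, AddSubgroup.coe_add, hr, hs]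

theorem exists_coe_decompose_eq_sum_of_mem_span
    (hsmul : ∀ (i j : ℤ), ∀ r ∈ 𝒜 i, ∀ x ∈ ℳ j, r • x ∈ ℳ (i + j))
    {Y : Finset M} {deg : M → ℤ} (hY : ∀ y ∈ Y, y ∈ ℳ (deg y))
    {x : M} (hx : x ∈ Submodule.span R (Y : Set M)) (n : ℤ) :
    ∃ f : M → R,
      (decompose ℳ x n : M) = ∑ y ∈ Y, (decompose 𝒜 (f y) (n - deg y) : R) • y := by
  classical
  obtain ⟨f, -, rfl⟩ := Submodule.mem_span_finset.mp hx
  refine ⟨f, ?_⟩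
  rw [decompose_sum, DFinsupp.finsetSum_apply, AddSubgroup.val_finsetSum]
  exact Finset.sum_congr rfl fun y hy => coe_decompose_smul_of_right_mem hsmul (hY y hy) _ n

theorem coe_decompose_of_neg (hA : ∀ i : ℤ, i < 0 → 𝒜 i = ⊥) (r : R) {j : ℤ}
    (hj : j < 0) : (decompose 𝒜 r j : R) = 0 := by
  simpa [hA j hj] using (decompose 𝒜 r j).2

theorem exists_forall_lt_eq_zero [Module.Finite R M]
    (hsmul : ∀ (i j : ℤ), ∀ r ∈ 𝒜 i, ∀ x ∈ ℳ j, r • x ∈ ℳ (i + j))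
    (hA : ∀ i : ℤ, i < 0 → 𝒜 i = ⊥) :
    ∃ δ : ℤ, ∀ n < δ, ∀ x ∈ ℳ n, x = 0 := by
  obtain ⟨Y, hYs, hYspan⟩ := (Submodule.fg_span_iff_fg_span_finset_subset _).mp
    (span_homogeneous_eq_top (R := R) (ℳ := ℳ) ▸ Module.Finite.fg_top)
  choose! deg hY using fun y (hy : y ∈ Y) => hYs hy
  obtain ⟨δ, hδ⟩ := (Y.image deg).bddBelow
  refine ⟨δ, fun n hn x hx => ?_⟩
  have hxY : x ∈ Submodule.span R (Y : Set M) := by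
    rw [← hYspan, span_homogeneous_eq_top]
    exact Submodule.mem_top
  obtain ⟨f, hf⟩ := exists_coe_decompose_eq_sum_of_mem_span hsmul hY hxY n
  rw [← decompose_of_mem_same ℳ hx, hf]
  refine Finset.sum_eq_zero fun y hy => ?_
  have hdeg := hδ (Finset.mem_image_of_mem deg hy)
  rw [coe_decompose_of_neg hA _ (by omega), zero_smul]

theorem exists_forall_gt_eq_zero_of_pow_smul_eq_zero [IsNoetherianRing R] [Module.Finite R M]
    (hsmul : ∀ (i j : ℤ), ∀ r ∈ 𝒜 i, ∀ x ∈ ℳ j, r • x ∈ ℳ (i + j))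
    (hstd : ∀ n : ℤ, 0 ≤ n →
      (𝒜 (n + 1) : Set R) ⊆ ↑(AddSubgroup.closure ((𝒜 n : Set R) * (𝒜 1 : Set R))))
    {I : Ideal R} (hI : (𝒜 1 : Set R) ⊆ I) :
    ∃ D : ℤ, ∀ n, D < n → ∀ x ∈ ℳ n,
      (∃ k : ℕ, ∀ r ∈ I ^ k, r • x = 0) → x = 0 := by
  obtain ⟨Y, hYs, hYspan⟩ := (Submodule.fg_span_iff_fg_span_finset_subset
    {y | (∃ d, y ∈ ℳ d) ∧ ∃ k : ℕ, ∀ r ∈ I ^ k, r • y = 0}).mp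
    (IsNoetherian.noetherian (R := R) _)
  choose! deg hY using fun y (hy : y ∈ Y) => (hYs hy).1
  choose! k hk using fun y (hy : y ∈ Y) => (hYs hy).2
  obtain ⟨D, hD⟩ := (Y.image fun y => deg y + k y).bddAbove
  refine ⟨D, fun n hn x hx hxk => ?_⟩
  have hxY : x ∈ Submodule.span R (Y : Set M) :=
    hYspan ▸ Submodule.subset_span ⟨⟨n, hx⟩, hxk⟩
  obtain ⟨f, hf⟩ := exists_coe_decompose_eq_sum_of_mem_span hsmul hY hxY n
  rw [← decompose_of_mem_same ℳ hx, hf]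
  refine Finset.sum_eq_zero fun y hy =>
    hk y hy _ (mem_pow_of_le_of_mem hstd hI ?_ (decompose 𝒜 (f y) _).2)
  have hdeg := hD (Finset.mem_image_of_mem (fun y => deg y + k y) hy)
  omega

theorem Ideal.isHomogeneous_of_forall_pos (hA : ∀ i : ℤ, i < 0 → 𝒜 i = ⊥) {I : Ideal R}
    (hI : ∀ i : ℤ, 0 < i → (𝒜 i : Set R) ⊆ I) : I.IsHomogeneous 𝒜 := by
  classical
  intro i r hr
  rcases lt_trichotomy i 0 with hi | rfl | hi
  · rw [coe_decompose_of_neg hA r hi]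
    exact I.zero_mem
  · have hpos : ∀ j ∈ (decompose 𝒜 r).support.erase 0, (decompose 𝒜 r j : R) ∈ I :=
      fun j hj =>
        if hj0 : 0 < j then hI j hj0 (decompose 𝒜 r j).2
        else by rw [coe_decompose_of_neg hA r (by grind)]; exact I.zero_mem
    by_cases h0 : 0 ∈ (decompose 𝒜 r).support
    · have hsplit := Finset.add_sum_erase _ (fun j => (decompose 𝒜 r j : R)) h0
      rw [sum_support_decompose] at hsplit
      rw [eq_sub_of_add_eq hsplit]
      exact I.sub_mem hr (I.sum_mem hpos)
    · rw [DFinsupp.notMem_support_iff.mp h0]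
      exact I.zero_mem
  · exact hI i hi (decompose 𝒜 r i).2

theorem annihilator_le_annihilator_decompose
    (hsmul : ∀ (i j : ℤ), ∀ r ∈ 𝒜 i, ∀ x ∈ ℳ j, r • x ∈ ℳ (i + j))
    {x : M} (hx : (Submodule.span R {x}).annihilator.IsHomogeneous 𝒜) (n : ℤ) :
    (Submodule.span R {x}).annihilator ≤
      (Submodule.span R {(decompose ℳ x n : M)}).annihilator := by
  classical
  intro a ha
  rw [Submodule.mem_annihilator_span_singleton, ← sum_support_decompose 𝒜 a, Finset.sum_smul]
  refine Finset.sum_eq_zero fun j _ => ?_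
  have hj : (decompose 𝒜 a j : R) • x = 0 :=
    (Submodule.mem_annihilator_span_singleton _ _).mp (hx j ha)
  rw [← coe_decompose_smul_add_of_left_mem hsmul (decompose 𝒜 a j).2, hj]
  simp

theorem exists_annihilator_decompose_eq
    (hsmul : ∀ (i j : ℤ), ∀ r ∈ 𝒜 i, ∀ x ∈ ℳ j, r • x ∈ ℳ (i + j))
    {p : Ideal R} (hp : p.IsPrime) (hpℳ : p.IsHomogeneous 𝒜)
    {x : M} (hx : p = (Submodule.span R {x}).annihilator) :
    ∃ n, p = (Submodule.span R {(decompose ℳ x n : M)}).annihilator := by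
  subst hx
  obtain ⟨n, hn⟩ := exists_annihilator_decompose_le (ℳ := ℳ) hp le_rfl
  exact ⟨n, le_antisymm (annihilator_le_annihilator_decompose hsmul hpℳ n) hn⟩

end Decomposition

end GradedModule

/-- Let `R` be a commutative Noetherian ℕ-graded ring (encoded as a ℤ-graded
ring with vanishing negative components) which is standard graded (each `R_{n+1} = R_n · R_1`
for `n ≥ 0`), and `M` a finitely generated ℤ-graded `R`-module.  Let `R_+ := ⨁_{n ≥ 1} R_n`
(as an ideal).  If `p ∈ Ass_R(M)` satisfies `R_+ ⊆ p`, then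
`v_p(M) ≤ end(Γ_{R_+}(M))`, where `v_p(M)` is the least degree of a homogeneous `x ∈ M` with
`p = (0 :_R x)`, and `end(Γ_{R_+}(M))` is the supremum of the degrees `n` for which the
degree-`n` component of `Γ_{R_+}(M) = ⋃_{k ≥ 1} (0 :_M R_+^k)` is nonzero. -/
theorem v_number_le_end_gamma
    {R M : Type*} [CommRing R] [IsNoetherianRing R]
    [AddCommGroup M] [Module R M] [Module.Finite R M]
    (𝒜 : ℤ → AddSubgroup R) (ℳ : ℤ → AddSubgroup M)
    [GradedRing 𝒜] [DirectSum.Decomposition ℳ]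
    (hsmul : ∀ (i j : ℤ), ∀ r ∈ 𝒜 i, ∀ x ∈ ℳ j, r • x ∈ ℳ (i + j))
    (hA : ∀ i : ℤ, i < 0 → 𝒜 i = ⊥)
    (hstd : ∀ n : ℤ, 0 ≤ n →
      (𝒜 (n + 1) : Set R) ⊆ ↑(AddSubgroup.closure ((𝒜 n : Set R) * (𝒜 1 : Set R))))
    (Rplus : Ideal R) (hRplus : Rplus = Ideal.span {r : R | ∃ n : ℤ, 1 ≤ n ∧ r ∈ 𝒜 n})
    (p : Ideal R) (hp : p ∈ associatedPrimes R M) (hpplus : Rplus ≤ p) :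
    sInf {u : ℤ | ∃ x ∈ ℳ u, p = (Submodule.span R {x}).annihilator}
      ≤ sSup {n : ℤ | ∃ x ∈ ℳ n, x ≠ 0 ∧ ∃ k : ℕ, 1 ≤ k ∧ ∀ r ∈ Rplus ^ k, r • x = 0} := by
  have hmem : ∀ n : ℤ, 0 < n → (𝒜 n : Set R) ⊆ Rplus := fun n hn r hr =>
    hRplus ▸ Ideal.subset_span ⟨n, hn, hr⟩
  obtain ⟨hprime, x, hx⟩ := isAssociatedPrime_iff.mp hp
  rw [Submodule.bot_colon'] at hx
  obtain ⟨i, hi⟩ := exists_annihilator_decompose_eq hsmul hprime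
    (Ideal.isHomogeneous_of_forall_pos hA fun n hn => (hmem n hn).trans hpplus) hx
  have hne : ∀ {y : M}, p = (Submodule.span R {y}).annihilator → y ≠ 0 := by
    rintro y hy rfl
    exact hprime.ne_top (by simp [hy, Submodule.annihilator_bot])
  obtain ⟨δ, hδ⟩ := exists_forall_lt_eq_zero hsmul hA
  obtain ⟨D, hD⟩ :=
    exists_forall_gt_eq_zero_of_pow_smul_eq_zero (ℳ := ℳ) hsmul hstd (hmem 1 one_pos)
  have hxi := (DirectSum.decompose ℳ x i).2
  refine le_trans (b := i) (csInf_le ⟨δ, ?_⟩ ⟨_, hxi, hi⟩)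
    (le_csSup ⟨D, ?_⟩ ⟨_, hxi, hne hi, 1, le_rfl, fun r hr => ?_⟩)
  · exact fun u ⟨y, hy, hyp⟩ => not_lt.mp fun hu => hne hyp (hδ u hu y hy)
  · exact fun n ⟨y, hy, hy0, k, _, hk⟩ => not_lt.mp fun hn => hy0 (hD n hn y hy ⟨k, hk⟩)
  · exact (Submodule.mem_annihilator_span_singleton _ _).mp (hi ▸ hpplus (pow_one Rplus ▸ hr))
end

section
/- Either ℒ_{(n,*)} = 0 for all sufficiently large n, or ℒ_{(n,*)} ≠ 0 for all sufficiently large n. In the latter case, the ideal (y_1, …, y_c) of T is not contained in the radical of Ann_T(ℒ); in particular δ := min{j : y_j ∉ √(Ann_T ℒ)} is a well-defined integer with 1 ≤ δ ≤ c. -/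
/-!
Every homogeneous element of `T` in a row `≥ 1` lies in `J = (y₁, …, y_c)`, and can then be
written as `∑ yⱼ uⱼ` with homogeneous `uⱼ`. Beyond the rows `≤ N` met by a finite generating set
of `ℒ`, this shows that row `n + 1` of `ℒ` is contained in `∑ⱼ yⱼ ℒ_{(n, * - dⱼ)}`. So one vanishing
row beyond `N` makes all later rows vanish, and row `N + k` lies in `Jᵏ ℒ`; if every `yⱼ` were in
`√(Ann ℒ)`, a power of `J` would kill `ℒ` and the rows would vanish eventually.
-/

open DirectSum Pointwise

section DecomposeSMul

variable {ι A M σ τ : Type*} [DecidableEq ι] [Semiring A] [SetLike σ A] (𝒜 : ι → σ)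
  [AddCommMonoid M] [Module A M] [SetLike τ M] [AddSubmonoidClass τ M] (ℳ : ι → τ)
  [Decomposition ℳ]

theorem DirectSum.coe_decompose_smul_add_of_left_mem [AddLeftCancelMonoid ι]
    [SetLike.GradedSMul 𝒜 ℳ] {a : A} {i : ι} (ha : a ∈ 𝒜 i) (m : M) (j : ι) :
    (decompose ℳ (a • m) (i + j) : M) = a • (decompose ℳ m j : M) := by
  induction m using Decomposition.inductionOn ℳ with
  | zero => simp
  | @homogeneous k m =>
    have hak : a • (m : M) ∈ ℳ (i + k) := SetLike.GradedSMul.smul_mem ha m.2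
    by_cases hkj : k = j
    · subst hkj
      rw [decompose_of_mem_same ℳ hak, decompose_of_mem_same ℳ m.2]
    · rw [decompose_of_mem_ne ℳ hak (by simpa using hkj), decompose_of_mem_ne ℳ m.2 hkj,
        smul_zero]
  | add m m' hm hm' => simp only [smul_add, decompose_add, add_apply, AddMemClass.coe_add, hm, hm']

theorem DirectSum.coe_decompose_smul [AddCommGroup ι] [SetLike.GradedSMul 𝒜 ℳ]
    [AddSubmonoidClass σ A] [Decomposition 𝒜] [∀ (i : ι) (x : 𝒜 i), Decidable (x ≠ 0)]
    (a : A) (m : M) (k : ι) :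
    (decompose ℳ (a • m) k : M) =
      ∑ i ∈ (decompose 𝒜 a).support, (decompose 𝒜 a i : A) • (decompose ℳ m (k - i) : M) := by
  conv_lhs => rw [← sum_support_decompose 𝒜 a, Finset.sum_smul]
  rw [decompose_sum, DFinsupp.finsetSum_apply, AddSubmonoidClass.coe_finsetSum]
  refine Finset.sum_congr rfl fun i _ => ?_
  rw [← coe_decompose_smul_add_of_left_mem 𝒜 ℳ (SetLike.coe_mem _), add_sub_cancel]

end DecomposeSMul

theorem exists_homogeneous_coeffs_of_mem_span_range {ι A κ σ : Type*} [DecidableEq ι]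
    [AddCommGroup ι] [CommSemiring A] [SetLike σ A] [AddSubmonoidClass σ A] (𝒜 : ι → σ)
    [GradedRing 𝒜]
    [Fintype κ] {y : κ → A} {e : κ → ι} (hy : ∀ j, y j ∈ 𝒜 (e j)) {t : A} {b : ι}
    (ht : t ∈ 𝒜 b) (htJ : t ∈ Ideal.span (Set.range y)) :
    ∃ u : κ → A, (∀ j, u j ∈ 𝒜 (b - e j)) ∧ t = ∑ j, y j * u j := by
  obtain ⟨v, rfl⟩ := Ideal.mem_span_range_iff_exists_fun.mp htJ
  refine ⟨fun j => decompose 𝒜 (v j) (b - e j), fun j => SetLike.coe_mem _, ?_⟩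
  calc ∑ j, v j * y j = (decompose 𝒜 (∑ j, v j * y j) b : A) := (decompose_of_mem_same 𝒜 ht).symm
    _ = ∑ j, y j * (decompose 𝒜 (v j) (b - e j) : A) := by
      rw [decompose_sum, DFinsupp.finsetSum_apply, AddSubmonoidClass.coe_finsetSum]
      refine Finset.sum_congr rfl fun j _ => ?_
      rw [mul_comm, ← coe_decompose_mul_add_of_left_mem 𝒜 (hy j), add_sub_cancel]

section StepSup

variable {ι T L κ : Type*} [AddCommGroup ι] [CommRing T] [AddCommGroup L] [Module T L]

def stepSup (ℒ : ι → AddSubgroup L) (y : κ → T) (e : κ → ι) (b : ι) : AddSubgroup L :=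
  ⨆ j, y j • ℒ (b - e j)

variable (𝒯 : ι → AddSubgroup T) {ℒ : ι → AddSubgroup L} [SetLike.GradedSMul 𝒯 ℒ]
  {y : κ → T} {e : κ → ι}

theorem smul_mem_stepSup {s : T} {a b : ι} (hs : s ∈ 𝒯 a) {m : L}
    (hm : m ∈ stepSup ℒ y e b) : s • m ∈ stepSup ℒ y e (a + b) := by
  refine AddSubgroup.iSup_induction (C := fun m => s • m ∈ stepSup ℒ y e (a + b)) _ hm
    (fun j _ hx => ?_) (by simp)
    fun m m' hm hm' => by simpa only [smul_add] using add_mem hm hm'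
  obtain ⟨m, hm, rfl⟩ := (AddSubgroup.mem_smul_pointwise_iff_exists _ _ _).mp hx
  refine AddSubgroup.mem_iSup_of_mem j ?_
  rw [smul_comm, add_sub_assoc]
  exact AddSubgroup.smul_mem_pointwise_smul _ _ _ (SetLike.GradedSMul.smul_mem (B := ℒ) hs hm)

theorem smul_mem_stepSup_of_mem_span [DecidableEq ι] [GradedRing 𝒯] [Fintype κ]
    (hy : ∀ j, y j ∈ 𝒯 (e j)) {s : T} {a b : ι} (hs : s ∈ 𝒯 a)
    (hsJ : s ∈ Ideal.span (Set.range y)) {m : L} (hm : m ∈ ℒ b) :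
    s • m ∈ stepSup ℒ y e (a + b) := by
  obtain ⟨u, hu, rfl⟩ := exists_homogeneous_coeffs_of_mem_span_range 𝒯 hy hs hsJ
  rw [Finset.sum_smul]
  refine sum_mem fun j _ => AddSubgroup.mem_iSup_of_mem j ?_
  rw [mul_smul, ← sub_add_eq_add_sub]
  exact AddSubgroup.smul_mem_pointwise_smul _ _ _ (SetLike.GradedSMul.smul_mem (B := ℒ) (hu j) hm)

end StepSup

section Rows

variable {T L : Type*} [CommRing T] [AddCommGroup L] [Module T L] {𝒯 : ℤ × ℤ → AddSubgroup T}
  [GradedRing 𝒯]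

theorem coe_decompose_eq_zero_of_fst_neg (hT : ∀ i : ℤ × ℤ, i.1 < 0 → 𝒯 i = ⊥) (t : T)
    {b : ℤ × ℤ} (hb : b.1 < 0) : (decompose 𝒯 t b : T) = 0 := by
  simpa [hT b hb] using SetLike.coe_mem (decompose 𝒯 t b)

theorem coe_decompose_mem_span_of_one_le_fst {R₀ : Type*} [CommRing R₀] [Algebra R₀ T]
    (hT : ∀ i : ℤ × ℤ, i.1 < 0 → 𝒯 i = ⊥) (halg : ∀ r : R₀, algebraMap R₀ T r ∈ 𝒯 (0, 0))
    {m n : ℕ} {x : Fin m → T} {y : Fin n → T} {f : Fin m → ℤ} {d : Fin n → ℤ}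
    (hx : ∀ i, x i ∈ 𝒯 (0, f i)) (hy : ∀ j, y j ∈ 𝒯 (1, d j))
    (hgen : Algebra.adjoin R₀ (Set.range x ∪ Set.range y) = ⊤) (t : T) {b : ℤ × ℤ}
    (hb : 1 ≤ b.1) : (decompose 𝒯 t b : T) ∈ Ideal.span (Set.range y) := by
  classical
  have zero_of_mem {s : T} {a b : ℤ × ℤ} (hs : s ∈ 𝒯 a) (ha : a.1 = 0) (hb : 1 ≤ b.1) :
      (decompose 𝒯 s b : T) = 0 := by
    rw [decompose_of_mem_ne 𝒯 hs (by rintro rfl; omega)]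
  induction (hgen ▸ Algebra.mem_top : t ∈ Algebra.adjoin R₀ _) using Algebra.adjoin_induction
    generalizing b with
  | mem u hu =>
    rcases hu with ⟨i, rfl⟩ | ⟨j, rfl⟩
    · rw [zero_of_mem (hx i) rfl hb]; exact zero_mem _
    · by_cases hjb : ((1 : ℤ), d j) = b
      · rw [← hjb, decompose_of_mem_same 𝒯 (hy j)]
        exact Ideal.subset_span ⟨j, rfl⟩
      · rw [decompose_of_mem_ne 𝒯 (hy j) hjb]; exact zero_mem _
  | algebraMap r => rw [zero_of_mem (halg r) rfl hb]; exact zero_mem _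
  | add u v _ _ hu hv =>
    rw [decompose_add, DirectSum.add_apply, AddMemClass.coe_add]
    exact add_mem (hu hb) (hv hb)
  | mul u v _ _ hu hv =>
    rw [← smul_eq_mul, coe_decompose_smul 𝒯 𝒯]
    refine Ideal.sum_mem _ fun e _ => ?_
    rw [smul_eq_mul]
    rcases lt_or_ge e.1 0 with he | he
    · rw [coe_decompose_eq_zero_of_fst_neg hT u he, zero_mul]; exact zero_mem _
    rcases he.lt_or_eq with he | he
    · exact Ideal.mul_mem_right _ _ (hu (by omega))
    · exact Ideal.mul_mem_left _ _ (hv (by rw [Prod.fst_sub]; omega))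

end Rows

section RowBound

variable {T L κ : Type*} [CommRing T] [AddCommGroup L] [Module T L]
  (𝒯 : ℤ × ℤ → AddSubgroup T) [GradedRing 𝒯] (ℒ : ℤ × ℤ → AddSubgroup L) [Decomposition ℒ]

theorem exists_fst_bound_of_decompose (s : Finset L) :
    ∃ N : ℤ, ∀ g ∈ s, ∀ b : ℤ × ℤ, N < b.1 → decompose ℒ g b = 0 := by
  classical
  obtain ⟨N, hN⟩ := (s.biUnion fun g => (decompose ℒ g).support.image Prod.fst).exists_le
  refine ⟨N, fun g hg b hb => not_ne_iff.mp fun hgb => hb.not_ge (hN b.1 ?_)⟩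
  exact Finset.mem_biUnion.mpr ⟨g, hg, Finset.mem_image_of_mem _ (DFinsupp.mem_support_iff.mpr hgb)⟩

variable {ℒ} [SetLike.GradedSMul 𝒯 ℒ] [Fintype κ] {y : κ → T} {e : κ → ℤ × ℤ}

theorem exists_forall_le_stepSup [Module.Finite T L] (hT : ∀ i : ℤ × ℤ, i.1 < 0 → 𝒯 i = ⊥)
    (hJ : ∀ (t : T) (b : ℤ × ℤ), 1 ≤ b.1 → (decompose 𝒯 t b : T) ∈ Ideal.span (Set.range y))
    (hy : ∀ j, y j ∈ 𝒯 (e j)) :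
    ∃ N : ℤ, ∀ b : ℤ × ℤ, N < b.1 → ℒ b ≤ stepSup ℒ y e b := by
  classical
  obtain ⟨s, hs⟩ := Module.Finite.fg_top (R := T) (M := L)
  obtain ⟨N, hN⟩ := exists_fst_bound_of_decompose ℒ s
  suffices h : ∀ w b, N < b.1 → (decompose ℒ w b : L) ∈ stepSup ℒ y e b from
    ⟨N, fun b hb w hw => decompose_of_mem_same ℒ hw ▸ h w b hb⟩
  intro w
  induction (hs ▸ Submodule.mem_top : w ∈ Submodule.span T s) using Submodule.span_induction with
  | mem g hg => intro b hb; simp [hN g hg b hb]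
  | zero => simp
  | add u v _ _ hu hv =>
    intro b hb
    rw [decompose_add, DirectSum.add_apply, AddMemClass.coe_add]
    exact add_mem (hu b hb) (hv b hb)
  | smul t w _ hw =>
    intro b hb
    rw [coe_decompose_smul 𝒯 ℒ]
    refine sum_mem fun a _ => ?_
    rcases lt_trichotomy a.1 0 with ha | ha | ha
    · simp [coe_decompose_eq_zero_of_fst_neg hT t ha]
    · have := smul_mem_stepSup 𝒯 (SetLike.coe_mem (decompose 𝒯 t a))
        (hw (b - a) (by rw [Prod.fst_sub]; omega))
      rwa [add_sub_cancel] at this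
    · have := smul_mem_stepSup_of_mem_span 𝒯 hy (SetLike.coe_mem _) (hJ t a ha)
        (SetLike.coe_mem (decompose ℒ w (b - a)))
      rwa [add_sub_cancel] at this

end RowBound

section RowSteps

variable {T L κ : Type*} [CommRing T] [AddCommGroup L] [Module T L] {ℒ : ℤ × ℤ → AddSubgroup L}
  {y : κ → T} {d : κ → ℤ}

theorem stepSup_succ_eq_bot {n : ℤ} (h : ∀ l, ℒ (n, l) = ⊥) (l : ℤ) :
    stepSup ℒ y (fun j => (1, d j)) (n + 1, l) = ⊥ := by
  refine iSup_eq_bot.mpr fun j => eq_bot_iff.mpr fun _ hx => ?_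
  obtain ⟨m, hm, rfl⟩ := (AddSubgroup.mem_smul_pointwise_iff_exists _ _ _).mp hx
  rw [Prod.mk_sub_mk, add_sub_cancel_right, h] at hm
  simp [(AddSubgroup.mem_bot).mp hm]

theorem le_pow_smul_top_of_le_stepSup {N : ℤ}
    (hN : ∀ b : ℤ × ℤ, N < b.1 → ℒ b ≤ stepSup ℒ y (fun j => (1, d j)) b) (k : ℕ) (l : ℤ) :
    ℒ (N + k, l) ≤ (Ideal.span (Set.range y) ^ k • ⊤ : Submodule T L).toAddSubgroup := by
  induction k generalizing l with
  | zero => simp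
  | succ k ih =>
    refine (hN _ (by simp)).trans (iSup_le fun j _ hx => ?_)
    obtain ⟨m, hm, rfl⟩ := (AddSubgroup.mem_smul_pointwise_iff_exists _ _ _).mp hx
    rw [Prod.mk_sub_mk, Nat.cast_succ, ← add_assoc, add_sub_cancel_right] at hm
    rw [pow_succ', Submodule.mul_smul]
    exact Submodule.smul_mem_smul (Ideal.subset_span ⟨j, rfl⟩) (ih _ hm)

end RowSteps

theorem eventually_zero_or_eventually_nonzero_rows_general
    {R₀ T L : Type*} [CommRing R₀] [CommRing T] [Algebra R₀ T]
    [IsNoetherianRing T] [AddCommGroup L] [Module T L] [Module.Finite T L]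
    (𝒯 : ℤ × ℤ → AddSubgroup T) [GradedRing 𝒯]
    (ℒ : ℤ × ℤ → AddSubgroup L) [DirectSum.Decomposition ℒ]
    (hsmul : ∀ (i j : ℤ × ℤ), ∀ t ∈ 𝒯 i, ∀ m ∈ ℒ j, t • m ∈ ℒ (i + j))
    (hTnn : ∀ i : ℤ × ℤ, i.1 < 0 ∨ i.2 < 0 → 𝒯 i = ⊥)
    (halg : ∀ r : R₀, algebraMap R₀ T r ∈ 𝒯 (0, 0))
    (dd c : ℕ) (x : Fin dd → T) (y : Fin c → T)
    (f : Fin dd → ℤ) (d : Fin c → ℤ)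
    (hx : ∀ i, x i ∈ 𝒯 (0, f i)) (hy : ∀ j, y j ∈ 𝒯 (1, d j))
    (hgen : Algebra.adjoin R₀ (Set.range x ∪ Set.range y) = ⊤) :
    (∃ n₀ : ℤ, ∀ n ≥ n₀, ∀ l : ℤ, ℒ (n, l) = ⊥) ∨
      ((∃ n₀ : ℤ, ∀ n ≥ n₀, ∃ l : ℤ, ℒ (n, l) ≠ ⊥) ∧
        ∃ j : Fin c, y j ∉ ((⊤ : Submodule T L).annihilator).radical) := by
  let _ : SetLike.GradedSMul 𝒯 ℒ := ⟨fun {i j _ _} ha hb => hsmul i j _ ha _ hb⟩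
  have hT : ∀ i : ℤ × ℤ, i.1 < 0 → 𝒯 i = ⊥ := fun i hi => hTnn i (.inl hi)
  obtain ⟨N, hN⟩ := exists_forall_le_stepSup 𝒯 (ℒ := ℒ) hT
    (coe_decompose_mem_span_of_one_le_fst hT halg hx hy hgen) hy
  by_cases hzero : ∃ n ≥ N, ∀ l, ℒ (n, l) = ⊥
  · obtain ⟨n₀, hn₀, hrow⟩ := hzero
    refine .inl ⟨n₀, Int.leInduction hrow fun n hn ih l => ?_⟩
    exact eq_bot_iff.mpr <|
      (hN (n + 1, l) (show N < n + 1 by omega)).trans (stepSup_succ_eq_bot ih l).le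
  push Not at hzero
  refine .inr ⟨⟨N, hzero⟩, ?_⟩
  by_contra! hrad
  obtain ⟨k, hk⟩ := Ideal.exists_pow_le_of_le_radical_of_fg
    (Ideal.span_le.mpr (Set.range_subset_iff.mpr hrad)) (IsNoetherian.noetherian _)
  obtain ⟨l, hl⟩ := hzero (N + k) (by omega)
  refine hl (eq_bot_iff.mpr ((le_pow_smul_top_of_le_stepSup hN k l).trans ?_))
  rw [← Submodule.bot_toAddSubgroup (R := T), Submodule.toAddSubgroup_le,
    ← Submodule.annihilator_smul (⊤ : Submodule T L)]
  exact Submodule.smul_mono_left hk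

/-- Let `T` be a commutative Noetherian (ℕ×ℕ)-graded ring (encoded as a
(ℤ×ℤ)-graded ring with vanishing components outside ℕ×ℕ), generated as an `R₀`-algebra by
homogeneous elements `x 1, …, x dd` of degrees `(0, f i)` and `y 1, …, y c` of degrees
`(1, d j)` with `d` monotone, and let `ℒ` be a finitely generated (ℤ×ℤ)-graded `T`-module.
Then either `ℒ_{(n,*)} = 0` for all sufficiently large `n`, or `ℒ_{(n,*)} ≠ 0` for all
sufficiently large `n`; and in the latter case the ideal `(y 1, …, y c)` is not contained in
the radical of `Ann_T(ℒ)`, i.e. there is a `j` with `y j ∉ √(Ann_T ℒ)` (so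
`δ = min{j | y j ∉ √(Ann_T ℒ)}` is well defined). -/
theorem eventually_zero_or_eventually_nonzero_rows
    {R₀ T L : Type*} [CommRing R₀] [IsNoetherianRing R₀] [CommRing T] [Algebra R₀ T]
    [IsNoetherianRing T] [AddCommGroup L] [Module T L] [Module.Finite T L]
    (𝒯 : ℤ × ℤ → AddSubgroup T) [GradedRing 𝒯]
    (ℒ : ℤ × ℤ → AddSubgroup L) [DirectSum.Decomposition ℒ]
    (hsmul : ∀ (i j : ℤ × ℤ), ∀ t ∈ 𝒯 i, ∀ m ∈ ℒ j, t • m ∈ ℒ (i + j))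
    (hTnn : ∀ i : ℤ × ℤ, i.1 < 0 ∨ i.2 < 0 → 𝒯 i = ⊥)
    (halg : ∀ r : R₀, algebraMap R₀ T r ∈ 𝒯 (0, 0))
    (dd c : ℕ) (x : Fin dd → T) (y : Fin c → T)
    (f : Fin dd → ℤ) (d : Fin c → ℤ) (hdmono : Monotone d)
    (hx : ∀ i, x i ∈ 𝒯 (0, f i)) (hy : ∀ j, y j ∈ 𝒯 (1, d j))
    (hgen : Algebra.adjoin R₀ (Set.range x ∪ Set.range y) = ⊤) :
    (∃ n₀ : ℤ, ∀ n ≥ n₀, ∀ l : ℤ, ℒ (n, l) = ⊥) ∨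
      ((∃ n₀ : ℤ, ∀ n ≥ n₀, ∃ l : ℤ, ℒ (n, l) ≠ ⊥) ∧
        ∃ j : Fin c, y j ∉ ((⊤ : Submodule T L).annihilator).radical) :=
  eventually_zero_or_eventually_nonzero_rows_general 𝒯 ℒ hsmul hTnn halg dd c x y f d hx hy hgen
end

section
/- Assume ℒ_{(n,*)} ≠ 0 for all sufficiently large n, let δ := min{j : y_j ∉ √(Ann_T ℒ)}, and let p be a prime ideal of R with p ∈ Ass_R(ℒ_{(n,*)}) for all sufficiently large n. Then there exist a_p ∈ {d_j : δ ≤ j ≤ c} and b_p ∈ ℤ such that v_p(ℒ_{(n,*)}) = a_p · n + b_p for all sufficiently large n. -/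
/-!
Since `p` is the annihilator of an element of a graded module it is homogeneous: the top
homogeneous component of an element of `p` acts nilpotently, hence lies in the prime `p`. So a
homogeneous `z` has `Ann_R z = p` exactly when `p` kills `z` and no homogeneous element outside `p`
does, i.e. when `z` is nonzero in `S / (K ∩ S)`, where `S = (0 :_ℒ p)` and `K` is the kernel of the
homogeneous localization at `p`. A graded prime filtration of `S / (K ∩ S)` (built with `ℤ × ℤ`
ordered lexicographically) shows that the degrees of such `z` are the union of finitely many
shifted degree supports `eₖ + Supp(T / Pₖ)`, with `Pₖ ⊇ Ann_T ℒ` prime.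

In row `a ≥ 1` the support of `T / P` is empty if every `y j` lies in `P`; otherwise it starts
exactly at `a * d j` for the least `j` with `y j ∉ P`: `y j ^ a` lies there, and every monomial
outside `P` has its degree in the cone `{(a, b) | a * d j ≤ b}`. Such `j` is at least `δ`, since
`P` contains the radical of `Ann_T ℒ`. Hence `v_p(ℒ_(n,*))` is eventually the minimum of
finitely many affine functions of `n`, which is eventually one of them.
-/

open DirectSum SetLike Filter

section GradedModule

variable {ι A M σ τ : Type*} [DecidableEq ι] [AddCommGroup ι]
  [CommRing A] [AddCommGroup M] [Module A M] [SetLike σ A] [SetLike τ M] [AddSubgroupClass τ M]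
  (𝒜 : ι → σ) (ℳ : ι → τ) [Decomposition ℳ] [GradedSMul 𝒜 ℳ]

theorem DirectSum.coe_decompose_smul_of_left_mem {a : A} {i : ι} (ha : a ∈ 𝒜 i) (m : M) (n : ι) :
    (decompose ℳ (a • m) n : M) = a • (decompose ℳ m (n - i) : M) := by
  classical
  conv_lhs => rw [← sum_support_decompose ℳ m, Finset.smul_sum, decompose_sum,
    DFinsupp.finsetSum_apply, AddSubmonoidClass.coe_finsetSum]
  have hmem : ∀ j, a • (decompose ℳ m j : M) ∈ ℳ (i + j) := fun j =>
    GradedSMul.smul_mem ha (decompose ℳ m j).2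
  refine (Finset.sum_eq_single (n - i) (fun j _ hj => ?_) fun hj => ?_).trans ?_
  · exact decompose_of_mem_ne ℳ (hmem j) fun h => hj (by rw [← h, add_sub_cancel_left])
  · rw [DFinsupp.notMem_support_iff.1 hj, ZeroMemClass.coe_zero, smul_zero, decompose_zero,
      DirectSum.zero_apply, ZeroMemClass.coe_zero]
  · exact decompose_of_mem_same ℳ (by simpa using hmem (n - i))

open scoped Classical in
theorem DirectSum.card_support_decompose_smul_lt {t : A} {i : ι} (ht : t ∈ 𝒜 i) {m : M} {j : ι}
    (hj : (decompose ℳ m j : M) ≠ 0) (htj : t • (decompose ℳ m j : M) = 0) :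
    (decompose ℳ (t • m)).support.card < (decompose ℳ m).support.card := by
  have hsub : (decompose ℳ (t • m)).support ⊆
      ((decompose ℳ m).support.erase j).image (i + ·) := by
    intro n hn
    have hn' : t • (decompose ℳ m (n - i) : M) ≠ 0 := by
      rw [← coe_decompose_smul_of_left_mem 𝒜 ℳ ht]
      simpa using hn
    refine Finset.mem_image.2 ⟨n - i, Finset.mem_erase.2 ⟨?_, ?_⟩, add_sub_cancel i n⟩
    · rintro rfl
      exact hn' htj
    · simpa using fun h : decompose ℳ m (n - i) = 0 => hn' (by simp [h])
  calc _ ≤ _ := Finset.card_le_card hsub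
    _ ≤ _ := Finset.card_image_le
    _ < _ := Finset.card_erase_lt_of_mem (by simpa using hj)

variable [AddSubgroupClass σ A] [GradedRing 𝒜]

theorem DirectSum.coe_decompose_smul_of_right_mem (a : A) {m : M} {j : ι} (hm : m ∈ ℳ j) (n : ι) :
    (decompose ℳ (a • m) n : M) = (decompose 𝒜 a (n - j) : A) • m := by
  classical
  conv_lhs => rw [← sum_support_decompose 𝒜 a, Finset.sum_smul, decompose_sum,
    DFinsupp.finsetSum_apply, AddSubmonoidClass.coe_finsetSum]
  have hmem : ∀ i, (decompose 𝒜 a i : A) • m ∈ ℳ (i + j) := fun i =>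
    GradedSMul.smul_mem (decompose 𝒜 a i).2 hm
  refine (Finset.sum_eq_single (n - j) (fun i _ hi => ?_) fun hi => ?_).trans ?_
  · exact decompose_of_mem_ne ℳ (hmem i) fun h => hi (by rw [← h, add_sub_cancel_right])
  · rw [DFinsupp.notMem_support_iff.1 hi, ZeroMemClass.coe_zero, zero_smul, decompose_zero,
      DirectSum.zero_apply, ZeroMemClass.coe_zero]
  · exact decompose_of_mem_same ℳ (by simpa using hmem (n - j))

theorem Submodule.IsHomogeneous.colon_singleton {V : Submodule A M} (hV : V.IsHomogeneous ℳ)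
    {z : M} {j : ι} (hz : z ∈ ℳ j) : Ideal.IsHomogeneous 𝒜 (V.colon {z}) := by
  intro i r hr
  rw [Submodule.mem_colon_singleton] at hr ⊢
  have := hV (i + j) hr
  rwa [coe_decompose_smul_of_right_mem 𝒜 ℳ r hz, add_sub_cancel_right] at this

include 𝒜 in
theorem Submodule.IsHomogeneous.sup_span_singleton {V : Submodule A M} (hV : V.IsHomogeneous ℳ)
    {z : M} {j : ι} (hz : z ∈ ℳ j) : (V ⊔ span A {z}).IsHomogeneous ℳ := by
  intro i w hw
  obtain ⟨v, hv, _, hw', rfl⟩ := mem_sup.1 hw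
  obtain ⟨a, rfl⟩ := mem_span_singleton.1 hw'
  rw [decompose_add, DirectSum.add_apply, AddMemClass.coe_add,
    coe_decompose_smul_of_right_mem 𝒜 ℳ a hz]
  exact add_mem (mem_sup_left (hV i hv))
    (mem_sup_right (smul_mem _ _ (mem_span_singleton_self z)))

/-- What a graded prime filtration `N = V₀ ⊂ ⋯ ⊂ Vₛ = V` with `Vₖ₊₁ / Vₖ ≅ (A / Pₖ)(-eₖ)` says
about degrees: `V / N` is nonzero in degree `i` iff some `A / Pₖ` is nonzero in degree `i - eₖ`. -/
def HasGradedPrimeFiltration (N V : Submodule A M) : Prop :=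
  ∃ F : Finset (Ideal A × ι), (∀ Pe ∈ F, Pe.1.IsPrime ∧ Module.annihilator A M ≤ Pe.1) ∧
    ∀ i, (∃ z ∈ ℳ i, z ∈ V ∧ z ∉ N) ↔ ∃ Pe ∈ F, ∃ a ∈ 𝒜 (i - Pe.2), a ∉ Pe.1

theorem HasGradedPrimeFiltration.sup_span_singleton {N V : Submodule A M}
    (h : HasGradedPrimeFiltration 𝒜 ℳ N V) (hV : V.IsHomogeneous ℳ) (hNV : N ≤ V) {z : M}
    {j : ι} (hz : z ∈ ℳ j) (hP : (V.colon {z}).IsPrime) :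
    HasGradedPrimeFiltration 𝒜 ℳ N (V ⊔ Submodule.span A {z}) := by
  classical
  obtain ⟨F, hF, hFiff⟩ := h
  refine ⟨insert (V.colon {z}, j) F, Finset.forall_mem_insert _ _ _ |>.2 ⟨⟨hP, fun a ha => ?_⟩, hF⟩,
    fun i => ?_⟩
  · rw [Submodule.mem_colon_singleton, Module.mem_annihilator.1 ha z]
    exact V.zero_mem
  simp only [Finset.exists_mem_insert, ← hFiff, Submodule.mem_colon_singleton]
  constructor
  · rintro ⟨w, hw, hwV, hwN⟩
    obtain ⟨v, hv, _, hw', rfl⟩ := Submodule.mem_sup.1 hwV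
    obtain ⟨a, rfl⟩ := Submodule.mem_span_singleton.1 hw'
    by_cases ha : (decompose 𝒜 a (i - j) : A) • z ∈ V
    · refine Or.inr ⟨v + a • z, hw, ?_, hwN⟩
      rw [← decompose_of_mem_same ℳ hw, decompose_add, DirectSum.add_apply, AddMemClass.coe_add,
        coe_decompose_smul_of_right_mem 𝒜 ℳ a hz]
      exact add_mem (hV i hv) ha
    · exact Or.inl ⟨_, (decompose 𝒜 a (i - j)).2, ha⟩
  · rintro (⟨a, ha, haP⟩ | ⟨w, hw, hwV, hwN⟩)
    · exact ⟨a • z, sub_add_cancel i j ▸ GradedSMul.smul_mem ha hz,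
        Submodule.mem_sup_right (Submodule.smul_mem _ _ (Submodule.mem_span_singleton_self z)),
        fun h => haP (hNV h)⟩
    · exact ⟨w, hw, Submodule.mem_sup_left hwV, hwN⟩

def Ideal.IsHomogeneousIn {B : Subring A} (p : Ideal B) : Prop :=
  ∀ b ∈ p, ∀ i, ∃ c ∈ p, (c : A) = decompose 𝒜 (b : A) i

theorem Ideal.mem_of_forall_decompose_mem {B : Subring A} (hB : SetLike.IsHomogeneous 𝒜 B)
    {p : Ideal B} {b : B} (h : ∀ i, (⟨decompose 𝒜 (b : A) i, hB i b.2⟩ : B) ∈ p) : b ∈ p := by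
  classical
  have hb : b = ∑ i ∈ (decompose 𝒜 (b : A)).support, ⟨decompose 𝒜 (b : A) i, hB i b.2⟩ :=
    Subtype.ext (by simp [sum_support_decompose])
  rw [hb]
  exact Ideal.sum_mem p fun i _ => h i

/-- The kernel of `M → M_(p)`, the localization at the homogeneous elements of `B` outside `p`. -/
def kerHomogeneousLocalization (M : Type*) [AddCommGroup M] [Module A M] {B : Subring A}
    (p : Ideal B) [p.IsPrime] : Submodule A M where
  carrier := {z | ∃ b : B, IsHomogeneousElem 𝒜 (b : A) ∧ b ∉ p ∧ (b : A) • z = 0}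
  add_mem' := by
    rintro z w ⟨b, ⟨i, hb⟩, hbp, hbz⟩ ⟨c, ⟨j, hc⟩, hcp, hcw⟩
    refine ⟨b * c, ⟨i + j, mul_mem_graded hb hc⟩,
      fun h => (Ideal.IsPrime.mem_or_mem ‹_› h).elim hbp hcp, ?_⟩
    rw [Subring.coe_mul, smul_add, mul_comm, mul_smul, mul_smul, hbz, smul_zero, zero_add,
      smul_comm, hcw, smul_zero]
  zero_mem' := ⟨1, ⟨0, one_mem_graded 𝒜⟩, (Ideal.ne_top_iff_one p).1 Ideal.IsPrime.ne_top',
    smul_zero _⟩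
  smul_mem' := by
    rintro a z ⟨b, hb, hbp, hbz⟩
    exact ⟨b, hb, hbp, by rw [smul_comm, hbz, smul_zero]⟩

theorem isHomogeneous_kerHomogeneousLocalization {B : Subring A} (p : Ideal B) [p.IsPrime] :
    (kerHomogeneousLocalization 𝒜 M p).IsHomogeneous ℳ := by
  rintro i z ⟨b, ⟨k, hb⟩, hbp, hbz⟩
  refine ⟨b, ⟨k, hb⟩, hbp, ?_⟩
  have := coe_decompose_smul_of_left_mem 𝒜 ℳ hb z (k + i)
  rwa [hbz, decompose_zero, DirectSum.zero_apply, ZeroMemClass.coe_zero, add_sub_cancel_left,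
    eq_comm] at this

theorem Ideal.IsHomogeneousIn.isHomogeneous_torsionBySet {B : Subring A} {p : Ideal B}
    (hp : p.IsHomogeneousIn 𝒜) :
    (Submodule.torsionBySet A M (Subtype.val '' (p : Set B))).IsHomogeneous ℳ := by
  classical
  intro i z hz
  rw [Submodule.mem_torsionBySet_iff] at hz ⊢
  rintro ⟨_, b, hb, rfl⟩
  rw [← sum_support_decompose 𝒜 (b : A), Finset.sum_smul]
  refine Finset.sum_eq_zero fun k _ => ?_
  obtain ⟨c, hc, hck⟩ := hp b hb k
  have := coe_decompose_smul_of_left_mem 𝒜 ℳ (decompose 𝒜 (b : A) k).2 z (k + i)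
  rw [← hck, hz ⟨c, c, hc, rfl⟩, decompose_zero, DirectSum.zero_apply, ZeroMemClass.coe_zero,
    add_sub_cancel_left, eq_comm] at this
  rwa [← hck]

theorem annihilator_span_singleton_eq_iff {B : Subring A} (hB : SetLike.IsHomogeneous 𝒜 B)
    {p : Ideal B} [p.IsPrime] (hp : p.IsHomogeneousIn 𝒜) {z : M} {j : ι} (hz : z ∈ ℳ j) :
    (B ∙ z).annihilator = p ↔ z ∈ Submodule.torsionBySet A M (Subtype.val '' (p : Set B)) ∧
      z ∉ kerHomogeneousLocalization 𝒜 M p := by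
  simp only [Submodule.mem_torsionBySet_iff, Subtype.forall, Set.mem_image]
  constructor
  · rintro rfl
    refine ⟨fun _ ⟨b, hb, hbz⟩ => hbz ▸ (Submodule.mem_annihilator_span_singleton z b).1 hb, ?_⟩
    rintro ⟨b, -, hbp, hbz⟩
    exact hbp ((Submodule.mem_annihilator_span_singleton _ _).2 hbz)
  rintro ⟨hS, hK⟩
  ext b
  rw [Submodule.mem_annihilator_span_singleton]
  refine ⟨fun hbz => ?_, fun hb => hS _ ⟨b, hb, rfl⟩⟩
  refine Ideal.mem_of_forall_decompose_mem 𝒜 hB fun i => ?_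
  by_contra hbi
  refine hK ⟨_, ⟨i, (decompose 𝒜 (b : A) i).2⟩, hbi, ?_⟩
  have := coe_decompose_smul_of_right_mem 𝒜 ℳ (b : A) hz (i + j)
  rwa [show (b : A) • z = 0 from hbz, decompose_zero, DirectSum.zero_apply, ZeroMemClass.coe_zero,
    add_sub_cancel_right, eq_comm] at this

theorem exists_annihilator_span_decompose_eq {B : Subring A} (hB : SetLike.IsHomogeneous 𝒜 B)
    {p : Ideal B} [p.IsPrime] (hp : p.IsHomogeneousIn 𝒜) {m : M} (hm : (B ∙ m).annihilator = p) :
    ∃ i, (B ∙ (decompose ℳ m i : M)).annihilator = p := by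
  have hmS : m ∈ Submodule.torsionBySet A M (Subtype.val '' (p : Set B)) := by
    rw [Submodule.mem_torsionBySet_iff]
    rintro ⟨_, b, hb, rfl⟩
    exact (Submodule.mem_annihilator_span_singleton m b).1 (hm ▸ hb)
  have hmK : m ∉ kerHomogeneousLocalization 𝒜 M p := fun ⟨b, _, hbp, hbm⟩ =>
    hbp (hm ▸ (Submodule.mem_annihilator_span_singleton _ _).2 hbm)
  obtain ⟨i, hi⟩ : ∃ i, (decompose ℳ m i : M) ∉ kerHomogeneousLocalization 𝒜 M p := by
    by_contra! h
    exact hmK ((AddSubmonoidClass.IsHomogeneous.mem_iff ℳ _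
      (isHomogeneous_kerHomogeneousLocalization 𝒜 ℳ p)).2 h)
  exact ⟨i, (annihilator_span_singleton_eq_iff 𝒜 ℳ hB hp (decompose ℳ m i).2).2
    ⟨hp.isHomogeneous_torsionBySet 𝒜 ℳ i hmS, hi⟩⟩

end GradedModule

theorem mem_range_of_decompose_ne_zero_of_mem_iSup {ι κ M : Type*} [DecidableEq ι]
    [AddCommGroup M] (ℳ : ι → AddSubgroup M) [Decomposition ℳ] (g : κ → ι) {m : M}
    (hm : m ∈ ⨆ k, ℳ (g k)) {i : ι} (hi : (decompose ℳ m i : M) ≠ 0) : i ∈ Set.range g := by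
  refine AddSubgroup.iSup_induction (C := fun m => ∀ i, (decompose ℳ m i : M) ≠ 0 → i ∈ Set.range g)
    _ hm (fun k z hz i hi => ?_) (fun i hi => ?_) (fun z w hz hw i hi => ?_) i hi
  · by_contra hik
    exact hi (decompose_of_mem_ne ℳ hz fun h => hik ⟨k, h⟩)
  · simp at hi
  · rw [decompose_add, DirectSum.add_apply, AddMemClass.coe_add] at hi
    by_cases hzi : (decompose ℳ z i : M) = 0
    · exact hw i (by rwa [hzi, zero_add] at hi)
    · exact hz i hzi

theorem exists_mem_annihilator_eq_of_mem_iSup {ι A M σ : Type*} [DecidableEq ι] [AddCommGroup ι]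
    [CommRing A] [AddCommGroup M] [Module A M] [SetLike σ A] [AddSubgroupClass σ A] (𝒜 : ι → σ)
    [GradedRing 𝒜] (ℳ : ι → AddSubgroup M) [Decomposition ℳ] [GradedSMul 𝒜 ℳ] {B : Subring A}
    (hB : SetLike.IsHomogeneous 𝒜 B) {p : Ideal B} [p.IsPrime] (hp : p.IsHomogeneousIn 𝒜)
    {κ : Type*} (g : κ → ι) {m : M} (hm : m ∈ ⨆ k, ℳ (g k)) (hmp : (B ∙ m).annihilator = p) :
    ∃ k, ∃ z ∈ ℳ (g k), (B ∙ z).annihilator = p := by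
  obtain ⟨i, hi⟩ := exists_annihilator_span_decompose_eq 𝒜 ℳ hB hp hmp
  have hi0 : (decompose ℳ m i : M) ≠ 0 := fun h => by
    rw [h, Submodule.span_singleton_eq_bot.2 rfl, Submodule.annihilator_bot] at hi
    exact Ideal.IsPrime.ne_top' hi.symm
  obtain ⟨k, rfl⟩ := mem_range_of_decompose_ne_zero_of_mem_iSup ℳ g hm hi0
  exact ⟨k, _, (decompose ℳ m (g k)).2, hi⟩

open scoped Classical in
theorem DirectSum.card_support_decompose_sub_lt {ι M τ : Type*} [DecidableEq ι] [AddCommGroup M]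
    [SetLike τ M] [AddSubgroupClass τ M] (ℳ : ι → τ) [Decomposition ℳ] {m : M} {j : ι}
    (hj : (decompose ℳ m j : M) ≠ 0) :
    (decompose ℳ (m - decompose ℳ m j)).support.card < (decompose ℳ m).support.card := by
  refine Finset.card_lt_card ⟨fun n hn => ?_, fun h => ?_⟩
  · rw [DFinsupp.mem_support_iff] at hn ⊢
    contrapose! hn
    rw [decompose_sub, DirectSum.sub_apply, hn, zero_sub, neg_eq_zero, ← Subtype.coe_inj]
    obtain rfl | hne := eq_or_ne n j
    · simp_all
    · exact decompose_of_mem_ne ℳ (decompose ℳ m j).2 hne.symm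
  · have := h (show j ∈ (decompose ℳ m).support by simpa using hj)
    simp at this

theorem DirectSum.exists_decompose_ne_zero_forall_le {ι M τ : Type*} [LinearOrder ι]
    [AddCommMonoid M] [SetLike τ M] [AddSubmonoidClass τ M] (ℳ : ι → τ) [Decomposition ℳ]
    {m : M} (hm : m ≠ 0) :
    ∃ j, (decompose ℳ m j : M) ≠ 0 ∧ ∀ j', (decompose ℳ m j' : M) ≠ 0 → j' ≤ j := by
  classical
  have hne : (decompose ℳ m).support.Nonempty := by
    rw [Finset.nonempty_iff_ne_empty, Ne, DFinsupp.support_eq_empty, ← decompose_zero ℳ]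
    exact (decompose ℳ).injective.ne hm
  exact ⟨_, by simpa using Finset.max'_mem _ hne,
    fun j' h => Finset.le_max' (decompose ℳ m).support j' (by simpa using h)⟩

section OrderedGradedModule

variable {ι A M σ τ : Type*} [AddCommGroup ι] [LinearOrder ι] [IsOrderedAddMonoid ι]
  [CommRing A] [AddCommGroup M] [Module A M] [SetLike σ A] [SetLike τ M] [AddSubgroupClass τ M]
  [AddSubgroupClass σ A] (𝒜 : ι → σ) (ℳ : ι → τ) [GradedRing 𝒜] [Decomposition ℳ]
  [GradedSMul 𝒜 ℳ]

theorem DirectSum.coe_decompose_smul_add_of_forall_le {a : A} {m : M} {i j : ι}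
    (ha : ∀ i', (decompose 𝒜 a i' : A) ≠ 0 → i' ≤ i)
    (hm : ∀ j', (decompose ℳ m j' : M) ≠ 0 → j' ≤ j) :
    (decompose ℳ (a • m) (i + j) : M) = (decompose 𝒜 a i : A) • (decompose ℳ m j : M) := by
  classical
  conv_lhs => rw [← sum_support_decompose 𝒜 a, Finset.sum_smul, decompose_sum,
    DFinsupp.finsetSum_apply, AddSubmonoidClass.coe_finsetSum]
  refine (Finset.sum_eq_single i (fun i' hi' hne => ?_) fun hi => ?_).trans ?_
  · rw [coe_decompose_smul_of_left_mem 𝒜 ℳ (decompose 𝒜 a i').2]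
    have hlt : i' < i := (ha i' (by simpa using hi')).lt_of_ne hne
    by_contra h
    have := hm _ (right_ne_zero_of_smul h)
    rw [sub_le_iff_le_add, add_comm j, add_le_add_iff_right] at this
    exact (not_le.2 hlt) this
  · rw [DFinsupp.notMem_support_iff.1 hi]
    simp
  · rw [coe_decompose_smul_of_left_mem 𝒜 ℳ (decompose 𝒜 a i).2, add_sub_cancel_left]

include ℳ in
theorem DirectSum.exists_pow_smul_eq_zero_of_smul_eq_zero {a : A} {i : ι}
    (ha : ∀ i', (decompose 𝒜 a i' : A) ≠ 0 → i' ≤ i) {m : M} (h : a • m = 0) :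
    ∃ n : ℕ, (decompose 𝒜 a i : A) ^ n • m = 0 := by
  classical
  induction hN : (decompose ℳ m).support.card using Nat.strong_induction_on generalizing m with
  | _ N ih =>
  obtain rfl | hm0 := eq_or_ne m 0
  · exact ⟨0, smul_zero _⟩
  obtain ⟨j, hmj, hj⟩ := exists_decompose_ne_zero_forall_le ℳ hm0
  -- the top component of `a` kills that of `m`, so multiplying by it shrinks the support of `m`
  have htop : (decompose 𝒜 a i : A) • (decompose ℳ m j : M) = 0 := by
    rw [← coe_decompose_smul_add_of_forall_le 𝒜 ℳ ha hj, h]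
    simp
  obtain ⟨n, hn⟩ := ih _ (hN ▸ card_support_decompose_smul_lt 𝒜 ℳ (decompose 𝒜 a i).2 hmj htop)
    (by rw [smul_comm, h, smul_zero]) rfl
  exact ⟨n + 1, by rw [pow_succ, mul_smul, hn]⟩

include ℳ in
theorem Ideal.isHomogeneousIn_annihilator_span_singleton {B : Subring A}
    (hB : SetLike.IsHomogeneous 𝒜 B) (m : M) [hp : (B ∙ m).annihilator.IsPrime] :
    (B ∙ m).annihilator.IsHomogeneousIn 𝒜 := by
  classical
  intro b hb
  induction hN : (decompose 𝒜 (b : A)).support.card using Nat.strong_induction_on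
    generalizing b with
  | _ N ih =>
  obtain hb0 | hb0 := eq_or_ne (b : A) 0
  · exact fun i => ⟨0, zero_mem _, by simp [hb0]⟩
  obtain ⟨k, hbk, hk⟩ := exists_decompose_ne_zero_forall_le 𝒜 hb0
  let t : B := ⟨decompose 𝒜 (b : A) k, hB k b.2⟩
  have ht : t ∈ (B ∙ m).annihilator := by
    obtain ⟨n, hn⟩ := exists_pow_smul_eq_zero_of_smul_eq_zero 𝒜 ℳ hk
      ((Submodule.mem_annihilator_span_singleton m b).1 hb)
    exact hp.mem_of_pow_mem n ((Submodule.mem_annihilator_span_singleton _ _).2 hn)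
  intro i
  obtain rfl | hik := eq_or_ne i k
  · exact ⟨t, ht, rfl⟩
  obtain ⟨c, hc, hci⟩ :=
    ih _ (hN ▸ card_support_decompose_sub_lt 𝒜 hbk) (b - t) (sub_mem hb ht) rfl i
  refine ⟨c, hc, hci.trans ?_⟩
  rw [AddSubgroupClass.coe_sub, decompose_sub, DirectSum.sub_apply, AddSubgroupClass.coe_sub,
    decompose_of_mem_ne 𝒜 (decompose 𝒜 (b : A) k).2 hik.symm, sub_zero]

include 𝒜 in
theorem Submodule.IsHomogeneous.exists_isPrime_colon_singleton [IsNoetherianRing A]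
    {V W : Submodule A M} (hV : V.IsHomogeneous ℳ) (hW : W.IsHomogeneous ℳ) (hVW : V < W) :
    ∃ j, ∃ z ∈ ℳ j, z ∈ W ∧ z ∉ V ∧ (V.colon {z}).IsPrime := by
  obtain ⟨w, hwW, hwV⟩ := SetLike.exists_of_lt hVW
  obtain ⟨i, hi⟩ : ∃ i, (decompose ℳ w i : M) ∉ V := by
    by_contra! h
    exact hwV ((AddSubmonoidClass.IsHomogeneous.mem_iff ℳ V hV).2 h)
  -- a colon ideal `V : z` that is maximal among those of homogeneous `z ∈ W \ V` is prime
  let Ω : Set (Ideal A) := {I | ∃ j, ∃ z ∈ ℳ j, z ∈ W ∧ z ∉ V ∧ I = V.colon {z}}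
  obtain ⟨_, ⟨j, z, hz, hzW, hzV, rfl⟩, hmax⟩ := set_has_maximal_iff_noetherian.2 inferInstance Ω
    ⟨_, i, _, (decompose ℳ w i).2, hW i hwW, hi, rfl⟩
  refine ⟨j, z, hz, hzW, hzV, (hV.colon_singleton 𝒜 ℳ hz).isPrime_of_homogeneous_mem_or_mem ?_ ?_⟩
  · rwa [Ne, Ideal.eq_top_iff_one, Submodule.mem_colon_singleton, one_smul]
  rintro a b - ⟨k, hb⟩ hab
  refine or_iff_not_imp_right.2 fun hbz => ?_
  rw [Submodule.mem_colon_singleton] at hab hbz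
  have hle : V.colon {z} ≤ V.colon {b • z} := fun r hr => by
    rw [Submodule.mem_colon_singleton] at hr ⊢
    rw [smul_comm]
    exact V.smul_mem b hr
  have heq : V.colon {z} = V.colon {b • z} := hle.eq_of_not_lt
    (hmax _ ⟨k + j, b • z, GradedSMul.smul_mem hb hz, W.smul_mem b hzW, hbz, rfl⟩)
  rw [heq, Submodule.mem_colon_singleton, smul_smul]
  exact hab

theorem Submodule.IsHomogeneous.hasGradedPrimeFiltration [IsNoetherianRing A] [Module.Finite A M]
    {N W : Submodule A M} (hN : N.IsHomogeneous ℳ) (hW : W.IsHomogeneous ℳ) (hNW : N ≤ W) :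
    HasGradedPrimeFiltration 𝒜 ℳ N W := by
  let 𝒞 : Set (Submodule A M) :=
    {V | V.IsHomogeneous ℳ ∧ N ≤ V ∧ V ≤ W ∧ HasGradedPrimeFiltration 𝒜 ℳ N V}
  have hN𝒞 : N ∈ 𝒞 := ⟨hN, le_rfl, hNW, ∅, by simp, fun i => by simp⟩
  obtain ⟨V, ⟨hV, hNV, hVW, hVF⟩, hmax⟩ :=
    set_has_maximal_iff_noetherian.2 inferInstance 𝒞 ⟨N, hN𝒞⟩
  obtain rfl | hlt := hVW.eq_or_lt
  · exact hVF
  obtain ⟨j, z, hz, hzW, hzV, hP⟩ := hV.exists_isPrime_colon_singleton 𝒜 ℳ hW hlt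
  refine absurd (hmax (V ⊔ span A {z}) ⟨hV.sup_span_singleton 𝒜 ℳ hz, hNV.trans le_sup_left,
    sup_le hVW ((span_singleton_le_iff_mem _ _).2 hzW), hVF.sup_span_singleton 𝒜 ℳ hV hNV hz hP⟩)
    (not_not.2 (lt_of_le_of_ne le_sup_left fun h => hzV ?_))
  exact h ▸ mem_sup_right (mem_span_singleton_self z)

end OrderedGradedModule

section LexGrading

variable {ι R σ : Type*} [SetLike σ R]

/-- The top-component arguments need a linearly ordered index; reindexing along `Lex` provides one
for `ℤ × ℤ`. -/
def lexGrading (𝒜 : ι → σ) : Lex ι → σ := fun i => 𝒜 (ofLex i)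

variable [DecidableEq ι] [DecidableEq (Lex ι)]

theorem DirectSum.coeAddMonoidHom_lexGrading [AddCommMonoid R] [AddSubmonoidClass σ R]
    (ℳ : ι → σ) (x : ⨁ i, ℳ i) :
    DirectSum.coeAddMonoidHom (lexGrading ℳ) x = DirectSum.coeAddMonoidHom ℳ x := by
  classical
  refine (coeAddMonoidHom_eq_dfinsuppSum (lexGrading ℳ) x).trans
    (Eq.trans ?_ (coeAddMonoidHom_eq_dfinsuppSum ℳ x).symm)
  congr

instance [AddMonoid ι] [Semiring R] [AddSubmonoidClass σ R] (𝒜 : ι → σ) [GradedRing 𝒜] :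
    GradedRing (lexGrading 𝒜) where
  one_mem := GradedOne.one_mem (A := 𝒜)
  mul_mem _ _ _ _ ha hb := GradedMul.mul_mem (A := 𝒜) ha hb
  decompose' := decompose 𝒜
  left_inv x := (coeAddMonoidHom_lexGrading 𝒜 _).trans (Decomposition.left_inv (ℳ := 𝒜) x)
  right_inv x :=
    (congrArg _ (coeAddMonoidHom_lexGrading 𝒜 x)).trans (Decomposition.right_inv (ℳ := 𝒜) x)

instance [AddCommMonoid R] [AddSubmonoidClass σ R] (ℳ : ι → σ) [Decomposition ℳ] :
    Decomposition (lexGrading ℳ) where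
  decompose' := decompose ℳ
  left_inv x := (coeAddMonoidHom_lexGrading ℳ _).trans (Decomposition.left_inv (ℳ := ℳ) x)
  right_inv x :=
    (congrArg _ (coeAddMonoidHom_lexGrading ℳ x)).trans (Decomposition.right_inv (ℳ := ℳ) x)

instance {A τ : Type*} [AddMonoid ι] [SMul A R] [SetLike τ A] (𝒜 : ι → τ) (ℳ : ι → σ)
    [GradedSMul 𝒜 ℳ] : GradedSMul (lexGrading 𝒜) (lexGrading ℳ) where
  smul_mem _ _ _ _ ha hm := GradedSMul.smul_mem (A := 𝒜) (B := ℳ) ha hm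

theorem SetLike.IsHomogeneous.lexGrading [AddCommMonoid R] [AddSubmonoidClass σ R] (ℳ : ι → σ)
    [Decomposition ℳ] {P : Type*} [SetLike P R] {p : P} (hp : IsHomogeneous ℳ p) :
    IsHomogeneous (lexGrading ℳ) p :=
  fun i _ h => hp (ofLex i) h

theorem DirectSum.coe_decompose_lexGrading [AddCommMonoid R] [AddSubmonoidClass σ R] (ℳ : ι → σ)
    [Decomposition ℳ] (x : R) (i : Lex ι) :
    (decompose (lexGrading ℳ) x i : R) = decompose ℳ x (ofLex i) :=
  rfl

end LexGrading

theorem HasGradedPrimeFiltration.of_lexGrading {ι A M σ τ : Type*} [AddCommGroup ι] [CommRing A]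
    [AddCommGroup M] [Module A M] [SetLike σ A] [SetLike τ M] {𝒜 : ι → σ} {ℳ : ι → τ}
    {N V : Submodule A M} (h : HasGradedPrimeFiltration (lexGrading 𝒜) (lexGrading ℳ) N V) :
    HasGradedPrimeFiltration 𝒜 ℳ N V := by
  obtain ⟨F, hF, hFiff⟩ := h
  let e : Ideal A × Lex ι ≃ Ideal A × ι := (Equiv.refl _).prodCongr ofLex
  refine ⟨F.map e.toEmbedding, fun Pe hPe => hF _ (Finset.mem_map_equiv.1 hPe), fun i => ?_⟩
  refine (hFiff (toLex i)).trans ⟨fun ⟨Pe, hPe, ha⟩ => ⟨e Pe, Finset.mem_map_of_mem _ hPe, ha⟩, ?_⟩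
  rintro ⟨Pe, hPe, ha⟩
  exact ⟨e.symm Pe, Finset.mem_map_equiv.1 hPe, ha⟩

section LexTransport

variable {ι A M σ τ : Type*} [DecidableEq ι] [AddCommGroup ι] [LinearOrder (Lex ι)]
  [IsOrderedAddMonoid (Lex ι)] [CommRing A] [AddCommGroup M] [Module A M] [SetLike σ A]
  [AddSubgroupClass σ A] [SetLike τ M] [AddSubgroupClass τ M] (𝒜 : ι → σ) (ℳ : ι → τ)
  [GradedRing 𝒜] [Decomposition ℳ] [GradedSMul 𝒜 ℳ]

theorem Submodule.IsHomogeneous.hasGradedPrimeFiltration_of_lex [IsNoetherianRing A]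
    [Module.Finite A M] {N W : Submodule A M} (hN : N.IsHomogeneous ℳ) (hW : W.IsHomogeneous ℳ)
    (hNW : N ≤ W) : HasGradedPrimeFiltration 𝒜 ℳ N W :=
  letI : DecidableEq (Lex ι) := LinearOrder.toDecidableEq
  .of_lexGrading (Submodule.IsHomogeneous.hasGradedPrimeFiltration _ _
    (SetLike.IsHomogeneous.lexGrading ℳ hN) (SetLike.IsHomogeneous.lexGrading ℳ hW) hNW)

include ℳ in
theorem Ideal.isHomogeneousIn_annihilator_span_singleton_of_lex {B : Subring A}
    (hB : SetLike.IsHomogeneous 𝒜 B) (m : M) [(B ∙ m).annihilator.IsPrime] :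
    (B ∙ m).annihilator.IsHomogeneousIn 𝒜 := fun b hb i => by
  let _ : DecidableEq (Lex ι) := LinearOrder.toDecidableEq
  simpa only [coe_decompose_lexGrading, ofLex_toLex] using
    isHomogeneousIn_annihilator_span_singleton (lexGrading 𝒜) (lexGrading ℳ)
      (SetLike.IsHomogeneous.lexGrading 𝒜 hB) m b hb (toLex i)

theorem exists_finset_exists_annihilator_eq_iff [IsNoetherianRing A] [Module.Finite A M]
    {B : Subring A} (hB : SetLike.IsHomogeneous 𝒜 B) {p : Ideal B} [p.IsPrime]
    (hp : p.IsHomogeneousIn 𝒜) :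
    ∃ F : Finset (Ideal A × ι), (∀ Pe ∈ F, Pe.1.IsPrime ∧ Module.annihilator A M ≤ Pe.1) ∧
      ∀ i, (∃ z ∈ ℳ i, (B ∙ z).annihilator = p) ↔ ∃ Pe ∈ F, ∃ a ∈ 𝒜 (i - Pe.2), a ∉ Pe.1 := by
  have hS := hp.isHomogeneous_torsionBySet 𝒜 ℳ
  have hK := isHomogeneous_kerHomogeneousLocalization 𝒜 ℳ (M := M) p
  obtain ⟨F, hF, hFiff⟩ := Submodule.IsHomogeneous.hasGradedPrimeFiltration_of_lex 𝒜 ℳ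
    (fun i _ hz => Submodule.mem_inf.2 ⟨hK i hz.1, hS i hz.2⟩)
    hS inf_le_right
  refine ⟨F, hF, fun i => (exists_congr fun z => and_congr_right fun hz => ?_).trans (hFiff i)⟩
  rw [annihilator_span_singleton_eq_iff 𝒜 ℳ hB hp hz, Submodule.mem_inf]
  tauto

end LexTransport

section HomogeneousGenerators

variable {R₀ A ι σ : Type*} [CommRing R₀] [CommRing A] [Algebra R₀ A] [DecidableEq ι]
  [AddMonoid ι] [SetLike σ A] [AddSubgroupClass σ A] (𝒜 : ι → σ) [GradedRing 𝒜]

theorem IsHomogeneous.subringClosure_of_isHomogeneousElem {s : Set A}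
    (h : ∀ x ∈ s, IsHomogeneousElem 𝒜 x) : IsHomogeneous 𝒜 (Subring.closure s) := fun i x hx ↦ by
  induction hx using Subring.closure_induction generalizing i with
  | mem x hx =>
    obtain ⟨j, hj⟩ := h x hx
    obtain rfl | hij := eq_or_ne j i
    · rw [decompose_of_mem_same 𝒜 hj]
      exact Subring.subset_closure hx
    · rw [decompose_of_mem_ne 𝒜 hj hij]
      exact zero_mem _
  | zero => simp
  | one =>
    rw [decompose_one, one_def]
    obtain rfl | h := eq_or_ne i 0 <;> simp [of_eq_of_ne, *]
  | add _ _ _ _ h₁ h₂ => simpa using add_mem (h₁ i) (h₂ i)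
  | neg _ _ h₁ =>
    rw [decompose_neg, DFinsupp.neg_apply, NegMemClass.coe_neg]
    exact neg_mem (h₁ i)
  | mul x y _ _ h₁ h₂ =>
    classical
    rw [decompose_mul, DirectSum.mul_eq_dfinsuppSum]
    rw [DFinsupp.sum_apply, DFinsupp.sum, AddSubmonoidClass.coe_finsetSum]
    refine sum_mem fun j _ ↦ ?_
    rw [DFinsupp.sum_apply, DFinsupp.sum, AddSubmonoidClass.coe_finsetSum]
    refine sum_mem fun k _ ↦ ?_
    obtain rfl | h := eq_or_ne i (j + k) <;> simp [of_eq_of_ne, mul_mem, *]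

theorem Ideal.mem_of_mem_graded_of_notMem (halg : ∀ r : R₀, algebraMap R₀ A r ∈ 𝒜 0) {s : Set A}
    (hs : Algebra.adjoin R₀ s = ⊤) (P : Ideal A) (D : AddSubmonoid ι)
    (hsD : ∀ a ∈ s, ∃ j, a ∈ 𝒜 j ∧ (a ∈ P ∨ j ∈ D)) {i : ι} (hi : i ∉ D) {a : A}
    (ha : a ∈ 𝒜 i) : a ∈ P := by
  have hmono : ∀ t ∈ Submonoid.closure s, ∃ j, t ∈ 𝒜 j ∧ (t ∈ P ∨ j ∈ D) := by
    intro t ht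
    induction ht using Submonoid.closure_induction with
    | mem t ht => exact hsD t ht
    | one => exact ⟨0, one_mem_graded 𝒜, Or.inr D.zero_mem⟩
    | mul t t' _ _ ih ih' =>
      obtain ⟨j, ht, htP⟩ := ih
      obtain ⟨j', ht', ht'P⟩ := ih'
      refine ⟨j + j', mul_mem_graded ht ht', ?_⟩
      rcases htP with htP | hj
      · exact Or.inl (P.mul_mem_right t' htP)
      rcases ht'P with ht'P | hj'
      · exact Or.inl (P.mul_mem_left t ht'P)
      · exact Or.inr (D.add_mem hj hj')
  have hspan : ∀ t ∈ Submodule.span R₀ (Submonoid.closure s : Set A),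
      (decompose 𝒜 t i : A) ∈ P := by
    intro t ht
    induction ht using Submodule.span_induction with
    | mem t ht =>
      obtain ⟨j, htj, htP⟩ := hmono t ht
      obtain rfl | hji := eq_or_ne j i
      · rw [decompose_of_mem_same 𝒜 htj]
        exact htP.resolve_right hi
      · rw [decompose_of_mem_ne 𝒜 htj hji]
        exact P.zero_mem
    | zero => simp
    | add t t' _ _ ih ih' => simpa using P.add_mem ih ih'
    | smul r t _ ih =>
      rw [Algebra.smul_def, coe_decompose_mul_of_left_mem_zero 𝒜 (halg r)]
      exact P.mul_mem_left _ ih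
  have := hspan a (by rw [← Algebra.adjoin_eq_span, hs]; trivial)
  rwa [decompose_of_mem_same 𝒜 ha] at this

end HomogeneousGenerators

theorem exists_eventually_forall_affine_le {κ : Type*} (F : Finset κ) (hF : F.Nonempty)
    (α β : κ → ℤ) : ∃ k₀ ∈ F, ∀ᶠ n : ℤ in atTop, ∀ k ∈ F, α k₀ * n + β k₀ ≤ α k * n + β k := by
  obtain ⟨k₀, hk₀, hmin⟩ := F.exists_min_image (fun k => toLex (α k, β k)) hF
  refine ⟨k₀, hk₀, (eventually_all_finset F).2 fun k hk => ?_⟩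
  rcases Prod.Lex.toLex_le_toLex.1 (hmin k hk) with hlt | ⟨heq, hle⟩
  · filter_upwards [eventually_ge_atTop (β k₀ - β k), eventually_ge_atTop 0] with n hn hn0
    nlinarith
  · exact .of_forall fun n => by simp only at heq hle; rw [heq]; linarith

theorem exists_eventually_csInf_biUnion_eq_affine {κ : Type*} (F : Finset κ) (A : κ → ℤ → Set ℤ)
    (Q : ℤ → Prop) (hA : ∀ k ∈ F, (∀ᶠ n in atTop, A k n = ∅) ∨
      ∃ α, Q α ∧ ∃ β, ∀ᶠ n in atTop, IsLeast (A k n) (α * n + β))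
    (hne : ∃ᶠ n in atTop, (⋃ k ∈ F, A k n).Nonempty) :
    ∃ α, Q α ∧ ∃ β, ∀ᶠ n in atTop, sInf (⋃ k ∈ F, A k n) = α * n + β := by
  classical
  let G := F.filter fun k => ∃ α, Q α ∧ ∃ β, ∀ᶠ n in atTop, IsLeast (A k n) (α * n + β)
  choose! α hQ β hβ using fun k (hk : k ∈ G) => (Finset.mem_filter.1 hk).2
  have hempty : ∀ᶠ n in atTop, ∀ k ∈ F, k ∉ G → A k n = ∅ := by
    refine (eventually_all_finset F).2 fun k hk => ?_
    by_cases hkG : k ∈ G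
    · exact .of_forall fun _ h => absurd hkG h
    · exact ((hA k hk).resolve_right fun h => hkG (Finset.mem_filter.2 ⟨hk, h⟩)).mono
        fun _ h _ => h
  have hmem : ∀ᶠ n in atTop, ∀ u ∈ ⋃ k ∈ F, A k n, ∃ k ∈ G, u ∈ A k n := by
    filter_upwards [hempty] with n hE u hu
    obtain ⟨k, hk, hu⟩ := Set.mem_iUnion₂.1 hu
    by_cases hkG : k ∈ G
    · exact ⟨k, hkG, hu⟩
    · rw [hE k hk hkG] at hu
      exact hu.elim
  obtain ⟨k₀, hk₀, hmin⟩ := exists_eventually_forall_affine_le G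
    (by
      obtain ⟨n, ⟨u, hu⟩, hM⟩ := (hne.and_eventually hmem).exists
      obtain ⟨k, hk, -⟩ := hM u hu
      exact ⟨k, hk⟩) α β
  refine ⟨α k₀, hQ k₀ hk₀, β k₀, ?_⟩
  filter_upwards [hmem, (eventually_all_finset G).2 hβ, hmin] with n hM hL hle
  refine IsLeast.csInf_eq ⟨Set.mem_biUnion (Finset.mem_filter.1 hk₀).1 (hL k₀ hk₀).1, ?_⟩
  intro u hu
  obtain ⟨k, hk, hu⟩ := hM u hu
  exact (hle k hk).trans ((hL k hk).2 hu)

section Bigraded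

variable {R₀ T : Type*} [CommRing R₀] [CommRing T] [Algebra R₀ T]
  (𝒯 : ℤ × ℤ → AddSubgroup T) [GradedRing 𝒯] {dd c : ℕ} {x : Fin dd → T} {y : Fin c → T}
  {f : Fin dd → ℤ} {d : Fin c → ℤ} (hx : ∀ i, x i ∈ 𝒯 (0, f i)) (hy : ∀ j, y j ∈ 𝒯 (1, d j))
  (halg : ∀ r : R₀, algebraMap R₀ T r ∈ 𝒯 (0, 0))
  (hgen : Algebra.adjoin R₀ (Set.range x ∪ Set.range y) = ⊤)

include hx hy halg hgen

theorem nonneg_and_mul_le_of_mem_of_notMem {P : Ideal T} (hf : ∀ i, x i ∉ P → 0 ≤ f i)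
    {e₀ : ℤ} (he₀ : ∀ j, y j ∉ P → e₀ ≤ d j) {v : ℤ × ℤ} {t : T} (ht : t ∈ 𝒯 v) (htP : t ∉ P) :
    0 ≤ v.1 ∧ v.1 * e₀ ≤ v.2 := by
  let D : AddSubmonoid (ℤ × ℤ) :=
    { carrier := {v | 0 ≤ v.1 ∧ v.1 * e₀ ≤ v.2}
      add_mem' := fun ha hb =>
        ⟨add_nonneg ha.1 hb.1, by simpa [add_mul] using add_le_add ha.2 hb.2⟩
      zero_mem' := by simp }
  by_contra h
  refine htP (Ideal.mem_of_mem_graded_of_notMem 𝒯 halg hgen P D ?_ h ht)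
  rintro _ (⟨i, rfl⟩ | ⟨j, rfl⟩)
  · exact ⟨_, hx i, (em (x i ∈ P)).imp_right fun h => ⟨le_rfl, by simpa using hf i h⟩⟩
  · exact ⟨_, hy j, (em (y j ∈ P)).imp_right fun h => ⟨zero_le_one, by simpa using he₀ j h⟩⟩

theorem isLeast_degrees_notMem {P : Ideal T} (hP : P.IsPrime) (hf : ∀ i, x i ∉ P → 0 ≤ f i)
    {j : Fin c} (hj : y j ∉ P) (hjd : ∀ j', y j' ∉ P → d j ≤ d j') {a : ℤ} (ha : 0 ≤ a) :
    IsLeast {b | ∃ t ∈ 𝒯 (a, b), t ∉ P} (a * d j) := by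
  refine ⟨⟨y j ^ a.toNat, ?_, fun h => hj (hP.mem_of_pow_mem _ h)⟩,
    fun b ⟨t, ht, htP⟩ => (nonneg_and_mul_le_of_mem_of_notMem 𝒯 hx hy halg hgen hf hjd ht htP).2⟩
  have := SetLike.pow_mem_graded a.toNat (hy j)
  rwa [Prod.smul_mk, nsmul_eq_mul, nsmul_eq_mul, mul_one, Int.toNat_of_nonneg ha] at this

theorem eventually_degrees_eq_empty_or_isLeast (hdmono : Monotone d)
    (hf : ∀ i, x i ≠ 0 → 0 ≤ f i) {P : Ideal T} (hP : P.IsPrime) {δ : Fin c}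
    (hδ : ∀ j < δ, y j ∈ P) (e : ℤ × ℤ) :
    (∀ᶠ n in atTop, {u | ∃ t ∈ 𝒯 ((n, u) - e), t ∉ P} = ∅) ∨
      ∃ α, (∃ j, δ ≤ j ∧ α = d j) ∧
        ∃ β, ∀ᶠ n in atTop, IsLeast {u | ∃ t ∈ 𝒯 ((n, u) - e), t ∉ P} (α * n + β) := by
  have hfP : ∀ i, x i ∉ P → 0 ≤ f i := fun i h => hf i fun h0 => h (h0 ▸ P.zero_mem)
  by_cases hyP : ∀ j, y j ∈ P
  · left
    filter_upwards [eventually_gt_atTop e.1] with n hn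
    refine Set.eq_empty_of_forall_notMem fun u ⟨t, ht, htP⟩ => ?_
    have := nonneg_and_mul_le_of_mem_of_notMem 𝒯 hx hy halg hgen hfP (e₀ := |u - e.2| + 1)
      (fun j hj => absurd (hyP j) hj) ht htP
    simp only [Prod.fst_sub, Prod.snd_sub] at this
    nlinarith [le_abs_self (u - e.2), abs_nonneg (u - e.2)]
  · right
    push Not at hyP
    obtain ⟨j, hj, hjmin⟩ := WellFounded.has_min wellFounded_lt {j | y j ∉ P} hyP
    have hjd : ∀ j', y j' ∉ P → d j ≤ d j' := fun j' hj' => hdmono (not_lt.1 (hjmin j' hj'))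
    refine ⟨d j, ⟨j, not_lt.1 fun h => hj (hδ j h), rfl⟩, e.2 - e.1 * d j, ?_⟩
    filter_upwards [eventually_ge_atTop e.1] with n hn
    obtain ⟨⟨t, ht, htP⟩, hlow⟩ := isLeast_degrees_notMem 𝒯 hx hy halg hgen hP hfP hj hjd
      (a := n - e.1) (by omega)
    refine ⟨⟨t, ?_, htP⟩, fun u ⟨t', ht', ht'P⟩ => ?_⟩
    · convert ht using 2
      ext <;> simp only [Prod.fst_sub, Prod.snd_sub]
      ring
    · have := hlow ⟨t', ht', ht'P⟩
      linarith

end Bigraded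

theorem v_number_row_at_prime_eventually_linear_general
    {R₀ T L : Type*} [CommRing R₀] [CommRing T] [Algebra R₀ T]
    [IsNoetherianRing T] [AddCommGroup L] [Module T L] [Module.Finite T L]
    (𝒯 : ℤ × ℤ → AddSubgroup T) [GradedRing 𝒯]
    (ℒ : ℤ × ℤ → AddSubgroup L) [DirectSum.Decomposition ℒ]
    (hsmul : ∀ (i j : ℤ × ℤ), ∀ t ∈ 𝒯 i, ∀ m ∈ ℒ j, t • m ∈ ℒ (i + j))
    (hTnn : ∀ i : ℤ × ℤ, i.1 < 0 ∨ i.2 < 0 → 𝒯 i = ⊥)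
    (halg : ∀ r : R₀, algebraMap R₀ T r ∈ 𝒯 (0, 0))
    (dd c : ℕ) (x : Fin dd → T) (y : Fin c → T)
    (f : Fin dd → ℤ) (d : Fin c → ℤ) (hdmono : Monotone d)
    (hx : ∀ i, x i ∈ 𝒯 (0, f i)) (hy : ∀ j, y j ∈ 𝒯 (1, d j))
    (hgen : Algebra.adjoin R₀ (Set.range x ∪ Set.range y) = ⊤)
    (δ : Fin c)
    (hδmin : ∀ j : Fin c, j < δ → y j ∈ ((⊤ : Submodule T L).annihilator).radical)
    (Rsub : Subring T) (hRsub : Rsub = Subring.closure {t : T | ∃ l : ℤ, t ∈ 𝒯 (0, l)})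
    (p : Ideal Rsub) (hpprime : p.IsPrime)
    (hass : ∃ n₀ : ℤ, ∀ n ≥ n₀, ∃ m ∈ (⨆ l : ℤ, ℒ (n, l) : AddSubgroup L),
      ∀ r : Rsub, r ∈ p ↔ (r : T) • m = 0) :
    ∃ j : Fin c, δ ≤ j ∧ ∃ b : ℤ, ∃ n₀ : ℤ, ∀ n ≥ n₀,
      sInf {u : ℤ | ∃ m ∈ ℒ (n, u), ∀ r : Rsub, r ∈ p ↔ (r : T) • m = 0}
        = d j * n + b := by
  have : GradedSMul 𝒯 ℒ := ⟨@fun i j _ _ ha hm => hsmul i j _ ha _ hm⟩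
  have hann (m : L) : (∀ r : Rsub, r ∈ p ↔ (r : T) • m = 0) ↔ (Rsub ∙ m).annihilator = p := by
    simp only [SetLike.ext_iff, Submodule.mem_annihilator_span_singleton]
    exact forall_congr' fun r => Iff.comm
  have hB : SetLike.IsHomogeneous 𝒯 Rsub :=
    hRsub ▸ IsHomogeneous.subringClosure_of_isHomogeneousElem 𝒯 fun t ⟨l, ht⟩ => ⟨_, ht⟩
  obtain ⟨n₀, hass⟩ := hass
  obtain ⟨m₀, -, hm₀⟩ := hass n₀ le_rfl
  have hp : p.IsHomogeneousIn 𝒯 := by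
    rw [← (hann m₀).1 hm₀] at hpprime ⊢
    exact Ideal.isHomogeneousIn_annihilator_span_singleton_of_lex 𝒯 ℒ hB m₀
  obtain ⟨F, hF, hFiff⟩ := exists_finset_exists_annihilator_eq_iff 𝒯 ℒ hB hp
  have hV (n : ℤ) : {u | ∃ m ∈ ℒ (n, u), ∀ r : Rsub, r ∈ p ↔ (r : T) • m = 0} =
      ⋃ Pe ∈ F, {u | ∃ t ∈ 𝒯 ((n, u) - Pe.2), t ∉ Pe.1} := by
    ext u
    simpa only [hann, Set.mem_ofPred_eq, Set.mem_iUnion, exists_prop] using hFiff (n, u)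
  have hne : ∀ᶠ n in atTop, (⋃ Pe ∈ F, {u | ∃ t ∈ 𝒯 ((n, u) - Pe.2), t ∉ Pe.1}).Nonempty := by
    filter_upwards [eventually_ge_atTop n₀] with n hn
    obtain ⟨m, hm, hmp⟩ := hass n hn
    obtain ⟨l, z, hz, hzp⟩ :=
      exists_mem_annihilator_eq_of_mem_iSup 𝒯 ℒ hB hp (fun l => (n, l)) hm ((hann m).1 hmp)
    exact hV n ▸ ⟨l, z, hz, (hann z).2 hzp⟩
  have hf (i : Fin dd) (hi : x i ≠ 0) : 0 ≤ f i :=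
    not_lt.1 fun h => hi (by simpa [hTnn (0, f i) (Or.inr h)] using hx i)
  have hyF (Pe) (hPe : Pe ∈ F) (j) (hj : j < δ) : y j ∈ Pe.1 :=
    ((hF Pe hPe).1.radical_le_iff.2 (Submodule.annihilator_top.trans_le (hF Pe hPe).2)) (hδmin j hj)
  obtain ⟨_, ⟨j, hδj, rfl⟩, b, hb⟩ := exists_eventually_csInf_biUnion_eq_affine F _ _
    (fun Pe hPe => eventually_degrees_eq_empty_or_isLeast 𝒯 hx hy halg hgen hdmono hf
      (hF Pe hPe).1 (hyF Pe hPe) Pe.2) hne.frequently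
  exact ⟨j, hδj, b, by simpa only [hV] using eventually_atTop.1 hb⟩

/-- In the bigraded setup (Noetherian (ℕ×ℕ)-graded ring `T`, generated over
`R₀` by `x i` of degrees `(0, f i)` and `y j` of degrees `(1, d j)`, `d` monotone, and a
finitely generated (ℤ×ℤ)-graded `T`-module `ℒ`), assume `ℒ_{(n,*)} ≠ 0` for all sufficiently
large `n`, let `δ` be the least index with `y δ ∉ √(Ann_T ℒ)`, let `R := ⨁_l T_{(0,l)}` (the
subring of `T` generated by the elements that are homogeneous of degree `(0, l)` for some
`l`), and let `p` be a prime ideal of `R` lying in `Ass_R(ℒ_{(n,*)})` for all sufficiently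
large `n` (i.e. `p = (0 :_R m)` for some `m ∈ ℒ_{(n,*)} = ⨆_l ℒ_{(n,l)}`).  Then there exist
`a_p ∈ {d j | δ ≤ j ≤ c}` and `b_p ∈ ℤ` with `v_p(ℒ_{(n,*)}) = a_p * n + b_p` for all
sufficiently large `n`, where `v_p(ℒ_{(n,*)})` is the least `u` such that some `m ∈ ℒ_{(n,u)}`
has `p = (0 :_R m)`. -/
theorem v_number_row_at_prime_eventually_linear
    {R₀ T L : Type*} [CommRing R₀] [IsNoetherianRing R₀] [CommRing T] [Algebra R₀ T]
    [IsNoetherianRing T] [AddCommGroup L] [Module T L] [Module.Finite T L]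
    (𝒯 : ℤ × ℤ → AddSubgroup T) [GradedRing 𝒯]
    (ℒ : ℤ × ℤ → AddSubgroup L) [DirectSum.Decomposition ℒ]
    (hsmul : ∀ (i j : ℤ × ℤ), ∀ t ∈ 𝒯 i, ∀ m ∈ ℒ j, t • m ∈ ℒ (i + j))
    (hTnn : ∀ i : ℤ × ℤ, i.1 < 0 ∨ i.2 < 0 → 𝒯 i = ⊥)
    (halg : ∀ r : R₀, algebraMap R₀ T r ∈ 𝒯 (0, 0))
    (dd c : ℕ) (x : Fin dd → T) (y : Fin c → T)
    (f : Fin dd → ℤ) (d : Fin c → ℤ) (hdmono : Monotone d)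
    (hx : ∀ i, x i ∈ 𝒯 (0, f i)) (hy : ∀ j, y j ∈ 𝒯 (1, d j))
    (hgen : Algebra.adjoin R₀ (Set.range x ∪ Set.range y) = ⊤)
    (hnz : ∃ n₀ : ℤ, ∀ n ≥ n₀, ∃ l : ℤ, ℒ (n, l) ≠ ⊥)
    (δ : Fin c) (hδ : y δ ∉ ((⊤ : Submodule T L).annihilator).radical)
    (hδmin : ∀ j : Fin c, j < δ → y j ∈ ((⊤ : Submodule T L).annihilator).radical)
    (Rsub : Subring T) (hRsub : Rsub = Subring.closure {t : T | ∃ l : ℤ, t ∈ 𝒯 (0, l)})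
    (p : Ideal Rsub) (hpprime : p.IsPrime)
    (hass : ∃ n₀ : ℤ, ∀ n ≥ n₀, ∃ m ∈ (⨆ l : ℤ, ℒ (n, l) : AddSubgroup L),
      ∀ r : Rsub, r ∈ p ↔ (r : T) • m = 0) :
    ∃ j : Fin c, δ ≤ j ∧ ∃ b : ℤ, ∃ n₀ : ℤ, ∀ n ≥ n₀,
      sInf {u : ℤ | ∃ m ∈ ℒ (n, u), ∀ r : Rsub, r ∈ p ↔ (r : T) • m = 0}
        = d j * n + b :=
  v_number_row_at_prime_eventually_linear_general 𝒯 ℒ hsmul hTnn halg dd c x y f d hdmono hx hy hgen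
    δ hδmin Rsub hRsub p hpprime hass
end

section
/- Let p be a prime ideal of R such that p ∈ Ass_R(I^n M / I^n N) for all sufficiently large n. Then p ∈ Ass_R(M / I^n N) for all sufficiently large n, and there exist a ∈ {d_1, …, d_c} and b ∈ ℤ such that v_p(M / I^n N) ≤ a·n + b for all sufficiently large n. -/
/-!
The modules `Eₙ = {x ∈ IⁿM | p x ⊆ IⁿN}` form a `J`-filtration inside the `I`-adic filtration of
`M`. The latter is `J`-stable because `J` is a reduction of `I`, so over the Noetherian Rees algebra
of `J` the former is stable too: `Eₙ = J^(n - n₁) E_{n₁}` for `n ≥ n₁`. An element `x ∈ IⁿM` with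
`(IⁿN : x) = p` lies in `Eₙ`, hence is a combination of elements `a • g` with `a` a product of
`n - n₁` of the `y_j` and `g` in a fixed finite generating set of `E_{n₁}`; every such `a • g`
satisfies `p ⊆ (IⁿN : a • g)`, so prime avoidance yields one with `(IⁿN : a • g) = p`. Associated
primes of graded modules are homogeneous, so some homogeneous component of `a • g` still has
colon `p`, and its degree is at most `(n - n₁) · max_j d_j + max deg g`.
-/

open DirectSum Pointwise

namespace Submodule

variable {R M : Type*} [CommRing R] [AddCommGroup M] [Module R M]

theorem exists_colon_singleton_eq_of_mem_span {L : Submodule R M} {p : Ideal R} [hp : p.IsPrime]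
    {T : Set M} (hT : ∀ t ∈ T, p ≤ L.colon {t}) {x : M} (hx : x ∈ span R T)
    (hxp : L.colon {x} = p) : ∃ t ∈ T, L.colon {t} = p := by
  obtain ⟨T', hT'T, hxT'⟩ := mem_span_finite_of_mem_span hx
  have hle : T'.inf (fun t => L.colon {t}) ≤ p :=
    calc T'.inf (fun t => L.colon {t})
        ≤ L.colon (T' : Set M) := fun r hr => mem_colon.2 fun t ht =>
          mem_colon_singleton.1 (Finset.inf_le (f := fun t => L.colon {t}) ht hr)
      _ = L.colon (span R (T' : Set M)) := colon_span.symm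
      _ ≤ L.colon {x} := colon_mono le_rfl (Set.singleton_subset_iff.2 hxT')
      _ = p := hxp
  obtain ⟨t, ht, htp⟩ := hp.inf_le'.1 hle
  exact ⟨t, hT'T ht, htp.antisymm (hT t (hT'T ht))⟩

theorem colon_singleton_eq_iff {L : Submodule R M} {x : M} {p : Ideal R} :
    L.colon {x} = p ↔ ∀ r, r ∈ p ↔ r • x ∈ L := by
  simp only [Ideal.ext_iff, mem_colon_singleton, Iff.comm]

def colonPowers (L : Submodule R M) (c : R) : Submodule R M where
  carrier := {z | ∃ n : ℕ, c ^ n • z ∈ L}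
  add_mem' := by
    rintro z w ⟨n, hn⟩ ⟨m, hm⟩
    refine ⟨n + m, ?_⟩
    rw [smul_add, pow_add, mul_smul, mul_smul, smul_comm (c ^ n)]
    exact L.add_mem (L.smul_mem _ hn) (L.smul_mem _ hm)
  zero_mem' := ⟨0, by simp⟩
  smul_mem' r z := fun ⟨n, hn⟩ => ⟨n, by rw [smul_comm]; exact L.smul_mem r hn⟩

theorem le_colonPowers (L : Submodule R M) (c : R) : L ≤ L.colonPowers c :=
  fun z hz => ⟨0, by simpa using hz⟩

theorem mem_colonPowers_of_smul_mem {L : Submodule R M} {c : R} {z : M}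
    (h : c • z ∈ L.colonPowers c) : z ∈ L.colonPowers c :=
  let ⟨n, hn⟩ := h
  ⟨n + 1, by rwa [pow_succ, mul_smul]⟩

end Submodule

section Graded

variable {R M : Type*} [CommRing R] [AddCommGroup M] [Module R M]
  {𝒜 : ℤ → AddSubgroup R} {ℳ : ℤ → AddSubgroup M} [Decomposition ℳ] [SetLike.GradedSMul 𝒜 ℳ]

theorem mem_support_decompose_iff [∀ i (x : ℳ i), Decidable (x ≠ 0)] {x : M} {i : ℤ} :
    i ∈ (decompose ℳ x).support ↔ (decompose ℳ x i : M) ≠ 0 := by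
  rw [DFinsupp.mem_support_iff, Ne, Ne, ZeroMemClass.coe_eq_zero]

theorem notMem_support_decompose_iff [∀ i (x : ℳ i), Decidable (x ≠ 0)] {x : M} {i : ℤ} :
    i ∉ (decompose ℳ x).support ↔ (decompose ℳ x i : M) = 0 :=
  mem_support_decompose_iff.not_left

theorem exists_forall_decompose_eq_zero_of_finite {G : Set M} (hG : G.Finite) :
    ∃ lo hi : ℤ, ∀ g ∈ G, ∀ v, v < lo ∨ hi < v → (decompose ℳ g v : M) = 0 := by
  classical
  have hfin : (⋃ g ∈ G, ((decompose ℳ g).support : Set ℤ)).Finite :=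
    hG.biUnion fun g _ => Finset.finite_toSet _
  obtain ⟨lo, hlo⟩ := hfin.bddBelow
  obtain ⟨hi, hhi⟩ := hfin.bddAbove
  refine ⟨lo, hi, fun g hg v hv => not_not.1 fun h => ?_⟩
  have hmem : v ∈ ⋃ g ∈ G, ((decompose ℳ g).support : Set ℤ) :=
    Set.mem_biUnion hg (mem_support_decompose_iff.2 h)
  exact hv.elim (hlo hmem).not_gt (hhi hmem).not_gt

theorem coe_decompose_sub_coe_decompose (x : M) (k j : ℤ) :
    (decompose ℳ (x - decompose ℳ x k) j : M) = if j = k then 0 else decompose ℳ x j := by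
  rw [decompose_sub, DirectSum.sub_apply, AddSubgroup.coe_sub]
  split_ifs with hjk
  · rw [hjk, decompose_of_mem_same ℳ (SetLike.coe_mem _), sub_self, ZeroMemClass.coe_zero]
  · rw [decompose_of_mem_ne ℳ (SetLike.coe_mem _) (Ne.symm hjk), sub_zero]

theorem coe_decompose_smul_of_mem {r : R} {i : ℤ} (hr : r ∈ 𝒜 i) (x : M) (v : ℤ) :
    (decompose ℳ (r • x) v : M) = r • (decompose ℳ x (v - i) : M) := by
  induction x using Decomposition.inductionOn ℳ with
  | zero => simp
  | @homogeneous j m =>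
    have hrm : r • (m : M) ∈ ℳ (i + j) := SetLike.GradedSMul.smul_mem hr m.2
    by_cases h : v = i + j
    · rw [h, decompose_of_mem_same ℳ hrm, add_sub_cancel_left, decompose_of_mem_same ℳ m.2]
    · rw [decompose_of_mem_ne ℳ hrm (Ne.symm h), decompose_of_mem_ne ℳ m.2 (by omega),
        smul_zero]
  | add x y hx hy =>
    rw [smul_add, decompose_add, DirectSum.add_apply, AddSubgroup.coe_add, hx, hy, decompose_add,
      DirectSum.add_apply, AddSubgroup.coe_add, smul_add]

variable [GradedRing 𝒜]

theorem coe_decompose_smul_eq_sum {r : R} {s : Finset ℤ}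
    (hs : ∀ k ∉ s, (decompose 𝒜 r k : R) = 0) (x : M) (v : ℤ) :
    (decompose ℳ (r • x) v : M) =
      ∑ k ∈ s, (decompose 𝒜 r k : R) • (decompose ℳ x (v - k) : M) := by
  classical
  have hr : r = ∑ k ∈ s, (decompose 𝒜 r k : R) := by
    conv_lhs => rw [← sum_support_decompose 𝒜 r]
    exact Finset.sum_subset (fun k hk => not_not.1 fun hks => mem_support_decompose_iff.1 hk
      (hs k hks)) fun k _ hk => notMem_support_decompose_iff.1 hk
  conv_lhs => rw [hr, Finset.sum_smul]
  simp only [decompose_sum, DirectSum.sum_apply, AddSubmonoidClass.coe_finsetSum,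
    coe_decompose_smul_of_mem (SetLike.coe_mem _)]

theorem Ideal.IsHomogeneous.pow {I : Ideal R} (hI : I.IsHomogeneous 𝒜) (n : ℕ) :
    (I ^ n).IsHomogeneous 𝒜 := by
  induction n with
  | zero => simpa [Ideal.one_eq_top] using Ideal.IsHomogeneous.top 𝒜
  | succ n ih => rw [pow_succ]; exact ih.mul hI

theorem Ideal.IsHomogeneous.smul {K : Ideal R} (hK : K.IsHomogeneous 𝒜) {N : Submodule R M}
    (hN : N.IsHomogeneous ℳ) : (K • N).IsHomogeneous ℳ := by
  classical
  intro i x hx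
  refine Submodule.smul_induction_on hx (fun a ha n hn => ?_) fun x y hx hy => ?_
  · rw [coe_decompose_smul_eq_sum (s := (decompose 𝒜 a).support)
      fun k hk => notMem_support_decompose_iff.1 hk]
    exact Submodule.sum_mem _ fun k _ => Submodule.smul_mem_smul (hK k ha) (hN _ hn)
  · rw [decompose_add, DirectSum.add_apply, AddSubgroup.coe_add]
    exact Submodule.add_mem _ hx hy

theorem Ideal.isHomogeneous_of_forall_top_component_mem {P : Ideal R}
    (h : ∀ a ∈ P, ∀ k, (∀ j, k < j → (decompose 𝒜 a j : R) = 0) → (decompose 𝒜 a k : R) ∈ P) :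
    P.IsHomogeneous 𝒜 := by
  classical
  intro i a ha
  induction hs : (decompose 𝒜 a).support using Finset.strongInduction generalizing a with
  | H s ih =>
  by_cases hi : i ∈ s
  swap
  · rw [notMem_support_decompose_iff.1 (hs ▸ hi)]
    exact P.zero_mem
  set k := s.max' ⟨i, hi⟩
  have hk : (decompose 𝒜 a k : R) ∈ P := h a ha k fun j hj =>
    notMem_support_decompose_iff.1 (hs ▸ fun hj' => (s.le_max' j hj').not_gt hj)
  by_cases hik : i = k
  · rwa [hik]
  have hsub : (decompose 𝒜 (a - (decompose 𝒜 a k : R))).support ⊂ s := by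
    refine lt_of_le_of_lt (fun j hj => ?_) (Finset.erase_ssubset (s.max'_mem ⟨i, hi⟩))
    rw [mem_support_decompose_iff, coe_decompose_sub_coe_decompose] at hj
    split_ifs at hj with hjk
    · exact absurd rfl hj
    · exact Finset.mem_erase.2 ⟨hjk, hs ▸ mem_support_decompose_iff.2 hj⟩
  have := ih _ hsub (P.sub_mem ha hk) rfl
  rwa [coe_decompose_sub_coe_decompose, if_neg hik] at this

theorem Submodule.IsHomogeneous.mem_colonPowers_of_smul_mem {L : Submodule R M}
    (hL : L.IsHomogeneous ℳ) {a : R} {k : ℤ} (htop : ∀ j, k < j → (decompose 𝒜 a j : R) = 0)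
    {x : M} (hax : a • x ∈ L) : x ∈ L.colonPowers (decompose 𝒜 a k) := by
  classical
  set Q := L.colonPowers (decompose 𝒜 a k : R)
  have hstep : ∀ i, (∀ j, i < j → (decompose ℳ x j : M) ∈ Q) → (decompose ℳ x i : M) ∈ Q := by
    intro i hi
    apply Submodule.mem_colonPowers_of_smul_mem
    have hsum := coe_decompose_smul_eq_sum (ℳ := ℳ) (s := insert k (decompose 𝒜 a).support)
      (fun l hl => notMem_support_decompose_iff.1 fun h => hl (Finset.mem_insert_of_mem h))
      x (k + i)
    rw [← Finset.add_sum_erase _ _ (Finset.mem_insert_self _ _), add_sub_cancel_left] at hsum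
    rw [eq_sub_of_add_eq hsum.symm]
    refine Q.sub_mem (L.le_colonPowers _ (hL _ hax)) (Q.sum_mem fun l hl => ?_)
    rcases lt_or_gt_of_ne (Finset.ne_of_mem_erase hl) with hlk | hlk
    · exact Q.smul_mem _ (hi _ (by omega))
    · rw [htop l hlk, zero_smul]
      exact Q.zero_mem
  obtain ⟨_, B, hB⟩ := exists_forall_decompose_eq_zero_of_finite (ℳ := ℳ) (Set.finite_singleton x)
  have hcomp : ∀ (n : ℕ) (i : ℤ), B < i + n → (decompose ℳ x i : M) ∈ Q := by
    intro n
    induction n with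
    | zero => intro i hi; rw [hB x rfl i (Or.inr (by omega))]; exact Q.zero_mem
    | succ n ih => intro i hi; exact hstep i fun j hj => ih j (by omega)
  rw [← sum_support_decompose ℳ x]
  exact Q.sum_mem fun i _ => hcomp (B - i + 1).toNat i (by omega)

theorem Submodule.IsHomogeneous.isHomogeneous_colon_singleton {L : Submodule R M}
    (hL : L.IsHomogeneous ℳ) {x : M} (hp : (L.colon {x}).IsPrime) :
    (L.colon {x}).IsHomogeneous 𝒜 :=
  Ideal.isHomogeneous_of_forall_top_component_mem fun _ ha _ htop =>
    let ⟨n, hn⟩ := hL.mem_colonPowers_of_smul_mem htop (Submodule.mem_colon_singleton.1 ha)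
    hp.mem_of_pow_mem n (Submodule.mem_colon_singleton.2 hn)

theorem Submodule.IsHomogeneous.le_colon_singleton_decompose {L : Submodule R M}
    (hL : L.IsHomogeneous ℳ) {P : Ideal R} (hP : P.IsHomogeneous 𝒜) {x : M}
    (h : P ≤ L.colon {x}) (i : ℤ) : P ≤ L.colon {(decompose ℳ x i : M)} := by
  classical
  intro r hr
  rw [Submodule.mem_colon_singleton, ← sum_support_decompose 𝒜 r, Finset.sum_smul]
  refine L.sum_mem fun k _ => ?_
  have := hL (k + i) (Submodule.mem_colon_singleton.1 (h (hP k hr)))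
  rwa [coe_decompose_smul_of_mem (SetLike.coe_mem _), add_sub_cancel_left] at this

theorem Submodule.IsHomogeneous.exists_colon_singleton_decompose_eq {L : Submodule R M}
    (hL : L.IsHomogeneous ℳ) {p : Ideal R} [p.IsPrime] (hp : p.IsHomogeneous 𝒜) {x : M}
    (hx : L.colon {x} = p) : ∃ i, L.colon {(decompose ℳ x i : M)} = p := by
  classical
  have hspan : x ∈ Submodule.span R (Set.range fun i => (decompose ℳ x i : M)) := by
    nth_rw 2 [← sum_support_decompose ℳ x]
    exact Submodule.sum_mem _ fun i _ => Submodule.subset_span (Set.mem_range_self i)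
  obtain ⟨_, ⟨i, rfl⟩, hi⟩ := Submodule.exists_colon_singleton_eq_of_mem_span
    (by rintro _ ⟨i, rfl⟩; exact hL.le_colon_singleton_decompose hp hx.ge i) hspan hx
  exact ⟨i, hi⟩

theorem Submodule.IsHomogeneous.exists_mem_colon_singleton_eq_of_smul {L : Submodule R M}
    (hL : L.IsHomogeneous ℳ) {p : Ideal R} [p.IsPrime] {a : R} {u : ℤ} (ha : a ∈ 𝒜 u) {g : M}
    {U : ℤ} (hg : ∀ v, U < v → (decompose ℳ g v : M) = 0) (h : L.colon {a • g} = p) :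
    ∃ v ≤ u + U, ∃ z ∈ ℳ v, L.colon {z} = p := by
  have hp : p.IsHomogeneous 𝒜 := h ▸ hL.isHomogeneous_colon_singleton (h ▸ ‹_›)
  obtain ⟨v, hv⟩ := hL.exists_colon_singleton_decompose_eq hp h
  refine ⟨v, not_lt.1 fun hlt => ?_, _, SetLike.coe_mem _, hv⟩
  rw [coe_decompose_smul_of_mem ha, hg (v - u) (by omega), smul_zero,
    Submodule.colon_singleton_zero] at hv
  exact Ideal.IsPrime.ne_top ‹_› hv.symm

theorem exists_mem_le_of_mem_pow {S : Set R} {D : ℤ} (hS : ∀ s ∈ S, ∃ u ≤ D, s ∈ 𝒜 u) :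
    ∀ (k : ℕ), ∀ a ∈ S ^ k, ∃ u ≤ k * D, a ∈ 𝒜 u
  | 0, a, ha => ⟨0, by simp, by rw [pow_zero, Set.mem_one] at ha; exact ha ▸ SetLike.one_mem_graded 𝒜⟩
  | k + 1, _, ha => by
    obtain ⟨b, hb, s, hs, rfl⟩ := Set.mem_mul.1 (pow_succ S k ▸ ha)
    obtain ⟨u, hu, hbu⟩ := exists_mem_le_of_mem_pow hS k b hb
    obtain ⟨u', hu', hsu⟩ := hS s hs
    exact ⟨u + u', by push_cast; linarith, SetLike.mul_mem_graded hbu hsu⟩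

theorem bddBelow_setOf_exists_ne_zero [Module.Finite R M] (hA : ∀ i < 0, 𝒜 i = ⊥) :
    BddBelow {u : ℤ | ∃ x ∈ ℳ u, x ≠ 0} := by
  classical
  obtain ⟨s, hs⟩ := Module.Finite.fg_top (R := R) (M := M)
  obtain ⟨lo, _, hlo⟩ := exists_forall_decompose_eq_zero_of_finite (ℳ := ℳ) s.finite_toSet
  have hvanish : ∀ x : M, ∀ v < lo, (decompose ℳ x v : M) = 0 := by
    intro x
    have hx : x ∈ Submodule.span R (s : Set M) := hs ▸ Submodule.mem_top
    induction hx using Submodule.span_induction with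
    | mem g hg => exact fun v hv => hlo g hg v (Or.inl hv)
    | zero => intro v _; simp
    | add x y _ _ hx hy =>
      intro v hv
      rw [decompose_add, DirectSum.add_apply, AddSubgroup.coe_add, hx v hv, hy v hv, add_zero]
    | smul r x _ hx =>
      intro v hv
      rw [coe_decompose_smul_eq_sum (𝒜 := 𝒜) (s := (decompose 𝒜 r).support)
        fun k hk => notMem_support_decompose_iff.1 hk]
      refine Finset.sum_eq_zero fun k _ => ?_
      rcases lt_or_ge k 0 with hk | hk
      · have h0 : (decompose 𝒜 r k : R) = 0 := by simpa [hA k hk] using (decompose 𝒜 r k).2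
        rw [h0, zero_smul]
      · rw [hx (v - k) (by omega), smul_zero]
  refine ⟨lo, fun u ⟨x, hx, hx0⟩ => not_lt.1 fun hu => hx0 ?_⟩
  rw [← decompose_of_mem_same ℳ hx]
  exact hvanish x u hu

theorem bddBelow_setOf_colon_singleton_eq [Module.Finite R M] (hA : ∀ i < 0, 𝒜 i = ⊥)
    (L : Submodule R M) {p : Ideal R} (hp : p ≠ ⊤) :
    BddBelow {u : ℤ | ∃ x ∈ ℳ u, L.colon {x} = p} := by
  refine (bddBelow_setOf_exists_ne_zero (ℳ := ℳ) hA).mono ?_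
  rintro _ ⟨x, hx, hxp⟩
  refine ⟨x, hx, fun h0 => hp ?_⟩
  rwa [h0, Submodule.colon_singleton_zero, eq_comm] at hxp

end Graded

namespace Ideal.Filtration

variable {R M : Type*} [CommRing R] [AddCommGroup M] [Module R M] {I J : Ideal R}

def ofLE (h : J ≤ I) (F : I.Filtration M) : J.Filtration M where
  N := F.N
  mono := F.mono
  smul_le i := (Submodule.smul_mono_left h).trans (F.smul_le i)

def colon (F : I.Filtration M) (p : Ideal R) : I.Filtration M where
  N i :=
    { carrier := {x | ∀ r ∈ p, r • x ∈ F.N i}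
      add_mem' := fun hx hy r hr => by rw [smul_add]; exact add_mem (hx r hr) (hy r hr)
      zero_mem' := fun r _ => by rw [smul_zero]; exact zero_mem _
      smul_mem' := fun a x hx r hr => by rw [smul_comm]; exact (F.N i).smul_mem a (hx r hr) }
  mono i x hx r hr := F.mono i (hx r hr)
  smul_le i := Submodule.smul_le.2 fun a ha x hx r hr => by
    rw [smul_comm]
    exact F.smul_le i (Submodule.smul_mem_smul ha (hx r hr))

theorem mem_colon_N {F : I.Filtration M} {p : Ideal R} {i : ℕ} {x : M} :
    x ∈ (F.colon p).N i ↔ p ≤ (F.N i).colon {x} :=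
  forall₂_congr fun _ _ => Submodule.mem_colon_singleton.symm

theorem stable_ofLE_stableFiltration (hJI : J ≤ I) {m : ℕ} (hred : J * I ^ m = I ^ (m + 1))
    (N : Submodule R M) : ((I.stableFiltration N).ofLE hJI).Stable := by
  refine ⟨m, fun n hn => ?_⟩
  obtain ⟨k, rfl⟩ := Nat.exists_eq_add_of_le hn
  change J • I ^ (m + k) • N = I ^ (m + k + 1) • N
  rw [← mul_smul, pow_add, ← mul_assoc, hred, ← pow_add, add_right_comm]

end Ideal.Filtration

theorem exists_finset_forall_colon_eq_smul {R M : Type*} [CommRing R] [IsNoetherianRing R]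
    [AddCommGroup M] [Module R M] [Module.Finite R M] {I J : Ideal R} {S : Set R}
    (hJ : J = Ideal.span S) (hJI : J ≤ I) {m : ℕ} (hred : J * I ^ m = I ^ (m + 1))
    (N : Submodule R M) (p : Ideal R) [p.IsPrime] :
    ∃ (n₁ : ℕ) (G : Finset M), ∀ n ≥ n₁, ∀ x ∈ I ^ n • (⊤ : Submodule R M),
      (I ^ n • N).colon {x} = p → ∃ a ∈ S ^ (n - n₁), ∃ g ∈ G, (I ^ n • N).colon {a • g} = p := by
  set E := (I.stableFiltration ⊤).ofLE hJI ⊓ ((I.stableFiltration N).ofLE hJI).colon p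
  obtain ⟨n₁, hn₁⟩ :=
    ((Ideal.Filtration.stable_ofLE_stableFiltration hJI hred ⊤).of_le inf_le_left :
      E.Stable).exists_pow_smul_eq_of_ge
  obtain ⟨G, hG⟩ := IsNoetherian.noetherian (E.N n₁)
  refine ⟨n₁, G, fun n hn x hxI hx => ?_⟩
  have hEn : E.N n = Submodule.span R (S ^ (n - n₁) • (G : Set M)) := by
    rw [hn₁ n hn, ← hG, hJ, Submodule.span_pow, Submodule.span_smul_span]
  have hT : ∀ t ∈ S ^ (n - n₁) • (G : Set M), p ≤ (I ^ n • N).colon {t} := fun t ht =>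
    Ideal.Filtration.mem_colon_N.1 (hEn ▸ Submodule.subset_span ht : t ∈ E.N n).2
  have hxE : x ∈ E.N n := ⟨hxI, Ideal.Filtration.mem_colon_N.2 hx.ge⟩
  obtain ⟨_, ht, htp⟩ := Submodule.exists_colon_singleton_eq_of_mem_span hT (hEn ▸ hxE) hx
  obtain ⟨a, ha, g, hg, rfl⟩ := Set.mem_smul.1 ht
  exact ⟨a, ha, g, hg, htp⟩

theorem v_number_at_prime_of_M_mod_InN_linearly_bounded_general
    {R M : Type*} [CommRing R] [IsNoetherianRing R]
    [AddCommGroup M] [Module R M] [Module.Finite R M]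
    (𝒜 : ℤ → AddSubgroup R) (ℳ : ℤ → AddSubgroup M)
    [GradedRing 𝒜] [DirectSum.Decomposition ℳ]
    (hsmul : ∀ (i j : ℤ), ∀ r ∈ 𝒜 i, ∀ x ∈ ℳ j, r • x ∈ ℳ (i + j))
    (hA : ∀ i : ℤ, i < 0 → 𝒜 i = ⊥)
    (I : Ideal R) (hI : Ideal.IsHomogeneous 𝒜 I)
    (N : Submodule R M) (hN : ∀ x ∈ N, ∀ i : ℤ, (DirectSum.decompose ℳ x i : M) ∈ N)
    (c : ℕ) (y : Fin c → R) (d : Fin c → ℤ)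
    (hy : ∀ j, y j ∈ 𝒜 (d j))
    (J : Ideal R) (hJgen : J = Ideal.span (Set.range y)) (hJI : J ≤ I)
    (m0 : ℕ) (hred : J * I ^ m0 = I ^ (m0 + 1))
    (p : Ideal R) (hp : p.IsPrime)
    (hass : ∃ n₀ : ℕ, ∀ n ≥ n₀, ∃ x ∈ (I ^ n • ⊤ : Submodule R M),
      ∀ r : R, r ∈ p ↔ r • x ∈ (I ^ n • N : Submodule R M)) :
    (∃ n₁ : ℕ, ∀ n ≥ n₁, ∃ x : M,
      ∀ r : R, r ∈ p ↔ r • x ∈ (I ^ n • N : Submodule R M)) ∧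
    ∃ j : Fin c, ∃ b : ℤ, ∃ n₂ : ℕ, ∀ n ≥ n₂,
      sInf {u : ℤ | ∃ x ∈ ℳ u,
        ∀ r : R, r ∈ p ↔ r • x ∈ (I ^ n • N : Submodule R M)} ≤ d j * (n : ℤ) + b := by
  have : SetLike.GradedSMul 𝒜 ℳ := ⟨fun i j _ _ hr hx => hsmul i j _ hr _ hx⟩
  simp_rw [← Submodule.colon_singleton_eq_iff] at hass ⊢
  obtain ⟨n₀, hwit⟩ := hass
  refine ⟨⟨n₀, fun n hn => (hwit n hn).imp fun x hx => hx.2⟩, ?_⟩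
  obtain ⟨n₁, G, hG⟩ := exists_finset_forall_colon_eq_smul hJgen hJI hred N p
  have hsmulwit (n : ℕ) (hn : max n₀ n₁ ≤ n) :
      ∃ a ∈ Set.range y ^ (n - n₁), ∃ g ∈ G, (I ^ n • N).colon {a • g} = p :=
    let ⟨x, hxI, hx⟩ := hwit n (le_of_max_le_left hn)
    hG n (le_of_max_le_right hn) x hxI hx
  have : Nonempty (Fin c) := by
    obtain ⟨a, ha, -⟩ := hsmulwit (max n₀ n₁ + 1) (by omega)
    by_contra! hc
    rwa [Set.range_eq_empty, Set.empty_pow (by omega)] at ha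
  obtain ⟨j, hj⟩ := Finite.exists_max d
  obtain ⟨_, U, hU⟩ := exists_forall_decompose_eq_zero_of_finite (ℳ := ℳ) G.finite_toSet
  refine ⟨j, U - n₁ * d j, max n₀ n₁, fun n hn => ?_⟩
  obtain ⟨a, ha, g, hg, hag⟩ := hsmulwit n hn
  obtain ⟨u, hu, hau⟩ := exists_mem_le_of_mem_pow (𝒜 := 𝒜) (S := Set.range y)
    (by rintro _ ⟨i, rfl⟩; exact ⟨d i, hj i, hy i⟩) _ a ha
  obtain ⟨v, hv, z, hz, hzp⟩ := ((hI.pow n).smul fun i x hx => hN x hx i)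
    |>.exists_mem_colon_singleton_eq_of_smul hau (fun v hv => hU g hg v (Or.inr hv)) hag
  push_cast [le_of_max_le_right hn] at hu
  -- `sInf` of a set of integers that is not bounded below is `0`.
  linarith [csInf_le (bddBelow_setOf_colon_singleton_eq hA _ hp.ne_top) ⟨z, hz, hzp⟩]

/-- Same setup as Statement 9.  If `p` is a prime ideal with
`p ∈ Ass_R(I^n M / I^n N)` for all sufficiently large `n`, then `p ∈ Ass_R(M / I^n N)` for
all sufficiently large `n`, and there are `a ∈ {d 1, …, d c}` and `b ∈ ℤ` with
`v_p(M / I^n N) ≤ a * n + b` for all sufficiently large `n`, where `v_p(M / I^n N)` is the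
least degree of a homogeneous `x ∈ M` with `p = (I^n N :_R x)`. -/
theorem v_number_at_prime_of_M_mod_InN_linearly_bounded
    {R M : Type*} [CommRing R] [IsNoetherianRing R]
    [AddCommGroup M] [Module R M] [Module.Finite R M]
    (𝒜 : ℤ → AddSubgroup R) (ℳ : ℤ → AddSubgroup M)
    [GradedRing 𝒜] [DirectSum.Decomposition ℳ]
    (hsmul : ∀ (i j : ℤ), ∀ r ∈ 𝒜 i, ∀ x ∈ ℳ j, r • x ∈ ℳ (i + j))
    (hA : ∀ i : ℤ, i < 0 → 𝒜 i = ⊥)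
    (I : Ideal R) (hI : Ideal.IsHomogeneous 𝒜 I)
    (N : Submodule R M) (hN : ∀ x ∈ N, ∀ i : ℤ, (DirectSum.decompose ℳ x i : M) ∈ N)
    (c : ℕ) (y : Fin c → R) (d : Fin c → ℤ) (hdmono : Monotone d)
    (hy : ∀ j, y j ∈ 𝒜 (d j))
    (J : Ideal R) (hJgen : J = Ideal.span (Set.range y)) (hJI : J ≤ I)
    (m0 : ℕ) (hred : J * I ^ m0 = I ^ (m0 + 1))
    (p : Ideal R) (hp : p.IsPrime)
    (hass : ∃ n₀ : ℕ, ∀ n ≥ n₀, ∃ x ∈ (I ^ n • ⊤ : Submodule R M),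
      ∀ r : R, r ∈ p ↔ r • x ∈ (I ^ n • N : Submodule R M)) :
    (∃ n₁ : ℕ, ∀ n ≥ n₁, ∃ x : M,
      ∀ r : R, r ∈ p ↔ r • x ∈ (I ^ n • N : Submodule R M)) ∧
    ∃ j : Fin c, ∃ b : ℤ, ∃ n₂ : ℕ, ∀ n ≥ n₂,
      sInf {u : ℤ | ∃ x ∈ ℳ u,
        ∀ r : R, r ∈ p ↔ r • x ∈ (I ^ n • N : Submodule R M)} ≤ d j * (n : ℤ) + b :=
  v_number_at_prime_of_M_mod_InN_linearly_bounded_general 𝒜 ℳ hsmul hA I hI N hN c y d hy J hJgen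
    hJI m0 hred p hp hass
end

section
/- Assume (0 :_M I) = 0, and let u be a homogeneous ideal of R with I ⊆ u. Then there exists n₀ such that for all n ≥ n₀ one has (I^{n+1} N :_M u) ⊆ I^n M; consequently (I^{n+1} N :_M u) = (I^{n+1} N :_{I^n M} u) for all n ≥ n₀, i.e. the annihilator of u in M/I^{n+1}N coincides with the annihilator of u in I^n M/I^{n+1}N. -/
/-!
Since `I ⊆ u`, it suffices to show that `(I^{n+1} M :_M I) ⊆ I^n M` for large `n`. Choosing
generators `t₁, …, tₘ` of `I`, the hypothesis `(0 :_M I) = 0` makes `φ : x ↦ (tᵢ x)ᵢ` an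
embedding `M ↪ Mᵐ`, and `(I^{n+1} M :_M I) = φ⁻¹(I^{n+1} Mᵐ)`. By Artin–Rees for `φ(M) ⊆ Mᵐ`
this pullback equals `I · φ⁻¹(I^n Mᵐ)` for large `n`, and `I · (I^n M :_M I) ⊆ I^n M`.
-/

open Filter

section

variable {R M M' : Type*} [CommRing R] [AddCommGroup M] [Module R M]
  [AddCommGroup M'] [Module R M']

theorem Ideal.smul_top_eq_pi {ι : Type*} [Finite ι] (I : Ideal R) :
    (I • ⊤ : Submodule R (ι → M)) = Submodule.pi Set.univ fun _ => I • ⊤ := by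
  classical
  rw [← Submodule.pi_top Set.univ, ← Submodule.iSup_map_single, ← Submodule.iSup_map_single,
    Submodule.smul_iSup]
  simp_rw [Submodule.map_smul'']

theorem Ideal.forall_smul_mem_iff_of_span_eq {T : Set R} {I : Ideal R} (hT : Ideal.span T = I)
    {P : Submodule R M} {x : M} : (∀ r ∈ I, r • x ∈ P) ↔ ∀ t ∈ T, t • x ∈ P := by
  simp_rw [← Submodule.mem_colon_singleton (N := P)]
  rw [← SetLike.le_def, ← hT, Ideal.span_le]
  rfl

theorem Ideal.eventually_comap_pow_succ_smul_top_eq [IsNoetherianRing R] [Module.Finite R M']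
    (I : Ideal R) {f : M →ₗ[R] M'} (hf : Function.Injective f) :
    ∀ᶠ n in atTop, (I ^ (n + 1) • ⊤ : Submodule R M').comap f =
      I • (I ^ n • ⊤ : Submodule R M').comap f := by
  obtain ⟨k, hk⟩ := I.exists_pow_inf_eq_pow_smul (LinearMap.range f)
  refine eventually_atTop.2 ⟨k, fun n hn => ?_⟩
  have hrange : LinearMap.range f ⊓ I ^ (n + 1) • ⊤ = I • (LinearMap.range f ⊓ I ^ n • ⊤) := by
    rw [inf_comm, inf_comm _ (I ^ n • ⊤), hk n hn, hk (n + 1) (by omega), Nat.sub_add_comm hn,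
      pow_succ', mul_smul]
  rw [← Submodule.comap_map_eq_of_injective hf (_ • Submodule.comap f _), Submodule.map_smul'',
    Submodule.map_comap_eq, ← hrange, ← Submodule.map_comap_eq,
    Submodule.comap_map_eq_of_injective hf]

theorem Ideal.eventually_colon_pow_succ_smul_top_le [IsNoetherianRing R] [Module.Finite R M]
    (I : Ideal R) (h0 : ∀ x : M, (∀ r ∈ I, r • x = 0) → x = 0) :
    ∀ᶠ n in atTop, ∀ x : M, (∀ r ∈ I, r • x ∈ (I ^ (n + 1) • ⊤ : Submodule R M)) →
      x ∈ (I ^ n • ⊤ : Submodule R M) := by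
  obtain ⟨T, hT⟩ : I.FG := IsNoetherian.noetherian I
  let φ : M →ₗ[R] (T → M) := LinearMap.pi fun t => (t : R) • LinearMap.id
  have hcolon (m : ℕ) (x : M) : x ∈ (I ^ m • ⊤ : Submodule R (T → M)).comap φ ↔
      ∀ r ∈ I, r • x ∈ (I ^ m • ⊤ : Submodule R M) := by
    simp [Ideal.forall_smul_mem_iff_of_span_eq hT, Ideal.smul_top_eq_pi, φ]
  have hφ : Function.Injective φ := by
    refine LinearMap.ker_eq_bot.1 (eq_bot_iff.2 fun x hx => h0 x ?_)
    simpa using (Ideal.forall_smul_mem_iff_of_span_eq hT (P := ⊥)).2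
      (by simpa [φ, funext_iff] using hx)
  filter_upwards [I.eventually_comap_pow_succ_smul_top_eq hφ] with n hn x hx
  have hφx := (hcolon (n + 1) x).2 hx
  rw [hn] at hφx
  exact Submodule.smul_le.2 (fun r hr y hy => (hcolon n y).1 hy r hr) hφx

end

theorem colon_eventually_inside_InM_general
    {R M : Type*} [CommRing R] [IsNoetherianRing R]
    [AddCommGroup M] [Module R M] [Module.Finite R M]
    (I : Ideal R)
    (N : Submodule R M)
    (h0 : ∀ x : M, (∀ r ∈ I, r • x = 0) → x = 0)
    (u : Ideal R) (hIu : I ≤ u) :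
    ∃ n₀ : ℕ, ∀ n ≥ n₀,
      (∀ x : M, (∀ r ∈ u, r • x ∈ (I ^ (n + 1) • N : Submodule R M)) →
        x ∈ (I ^ n • ⊤ : Submodule R M)) ∧
      {x : M | ∀ r ∈ u, r • x ∈ (I ^ (n + 1) • N : Submodule R M)}
        = {x : M | x ∈ (I ^ n • ⊤ : Submodule R M) ∧
            ∀ r ∈ u, r • x ∈ (I ^ (n + 1) • N : Submodule R M)} := by
  obtain ⟨n₀, hn₀⟩ := eventually_atTop.1 (I.eventually_colon_pow_succ_smul_top_le h0)
  have hcolon (n : ℕ) (hn : n ≥ n₀) (x : M)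
      (hx : ∀ r ∈ u, r • x ∈ (I ^ (n + 1) • N : Submodule R M)) :
      x ∈ (I ^ n • ⊤ : Submodule R M) :=
    hn₀ n hn x fun r hr => Submodule.smul_mono le_rfl le_top (hx r (hIu hr))
  exact ⟨n₀, fun n hn =>
    ⟨hcolon n hn, Set.ext fun x => ⟨fun hx => ⟨hcolon n hn x hx, hx⟩, And.right⟩⟩⟩

/-- Setup: `R` is a commutative Noetherian ℕ-graded ring (encoded as a
ℤ-graded ring with vanishing negative components), `M` a finitely generated ℤ-graded
`R`-module, `I` a homogeneous ideal and `N` a graded submodule of `M`.  Assume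
`(0 :_M I) = 0` and let `u` be a homogeneous ideal with `I ⊆ u`.  Then there is `n₀` so
that for all `n ≥ n₀` one has `(I^(n+1) N :_M u) ⊆ I^n M`; consequently
`(I^(n+1) N :_M u) = (I^(n+1) N :_{I^n M} u)`, i.e. the annihilator of `u` in
`M / I^(n+1) N` coincides with the annihilator of `u` in `I^n M / I^(n+1) N`. -/
theorem colon_eventually_inside_InM
    {R M : Type*} [CommRing R] [IsNoetherianRing R]
    [AddCommGroup M] [Module R M] [Module.Finite R M]
    (𝒜 : ℤ → AddSubgroup R) (ℳ : ℤ → AddSubgroup M)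
    [GradedRing 𝒜] [DirectSum.Decomposition ℳ]
    (hsmul : ∀ (i j : ℤ), ∀ r ∈ 𝒜 i, ∀ x ∈ ℳ j, r • x ∈ ℳ (i + j))
    (hA : ∀ i : ℤ, i < 0 → 𝒜 i = ⊥)
    (I : Ideal R) (hI : Ideal.IsHomogeneous 𝒜 I)
    (N : Submodule R M) (hN : ∀ x ∈ N, ∀ i : ℤ, (DirectSum.decompose ℳ x i : M) ∈ N)
    (h0 : ∀ x : M, (∀ r ∈ I, r • x = 0) → x = 0)
    (u : Ideal R) (hu : Ideal.IsHomogeneous 𝒜 u) (hIu : I ≤ u) :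
    ∃ n₀ : ℕ, ∀ n ≥ n₀,
      (∀ x : M, (∀ r ∈ u, r • x ∈ (I ^ (n + 1) • N : Submodule R M)) →
        x ∈ (I ^ n • ⊤ : Submodule R M)) ∧
      {x : M | ∀ r ∈ u, r • x ∈ (I ^ (n + 1) • N : Submodule R M)}
        = {x : M | x ∈ (I ^ n • ⊤ : Submodule R M) ∧
            ∀ r ∈ u, r • x ∈ (I ^ (n + 1) • N : Submodule R M)} :=
  colon_eventually_inside_InM_general I N h0 u hIu
end
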